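/- arXiv:2102.11746 — 10 statements merged into one kernel-verified Lean document; each statement's English description precedes it below -/
import Mathlib

section
/- The sequence c(k)^{1/k} tends to 4 as k tends to infinity, where the k-th root is taken in the real numbers. -/
/-- The recursively defined function `t(k,r)`: `t(k,r) = 0` if `r = 0` or `r > k`,
`t(1,1) = 1`, and `t(k,r) = ∑_{s=1}^k t(k-r,s) * C(2s-1, r-1)` otherwise. -/
def trec : ℕ → ℕ → ℕ
  | k, r =>
    if _h : r = 0 ∨ k < r then 0
    else if k = 1 then (if r = 1 then 1 else 0)
    else ∑ s ∈ Finset.Icc 1 k, trec (k - r) s * Nat.choose (2 * s - 1) (r - 1)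
  termination_by k _ => k
  decreasing_by
    push_neg at _h
    omega

/-- The constant `c(k) = ∑_{r=1}^k t(k,r)/r`. -/
def cconst (k : ℕ) : ℚ := ∑ r ∈ Finset.Icc 1 k, (trec k r : ℚ) / r

/-!
Upper bound: by induction `t(k,r) ≤ 4^(k-r)`, since `∑_{s ≤ m} C(2s-1, j) 4^(m-s) ≤ 4^m`;
hence `c(k) ≤ k 4^k`.

Lower bound: fix `r` and let `B = C(2r-1, r-1)`. Keeping only the term `s = r` of the recursion
gives `t(d + m r, r) ≥ t(d, r) B^m`, and some `t(d, r)` is positive (descend from `r` to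
`⌈r/2⌉`); the case `r = 1` of the recursion shows that `t(k+1, 1) ≥ t(k, s)` for every `s`.
So `c(k) ≥ t(k, 1) ≥ B^⌊(k-d)/r⌋`, whence `liminf c(k)^(1/k) ≥ B^(1/r) ≥ 4 / (4r)^(1/r)`,
and this tends to `4` as `r → ∞`.
-/

open Finset Filter Topology Real

lemma trec_eq_zero {k r : ℕ} (h : r = 0 ∨ k < r) : trec k r = 0 := by
  rw [trec, dif_pos h]

lemma trec_one_one : trec 1 1 = 1 := by
  rw [trec]; rfl

lemma trec_eq_sum {k r : ℕ} (hk : 2 ≤ k) (hr : 1 ≤ r) (hrk : r ≤ k) :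
    trec k r = ∑ s ∈ Icc 1 k, trec (k - r) s * (2 * s - 1).choose (r - 1) := by
  rw [trec, dif_neg (by omega), if_neg (by omega)]

lemma one_le_and_le_of_trec_ne_zero {k r : ℕ} (h : trec k r ≠ 0) : 1 ≤ r ∧ r ≤ k := by
  by_contra h'
  exact h (trec_eq_zero (by omega))

lemma sum_range_choose_succ_add_choose (M j : ℕ) :
    ∑ i ∈ range (j + 1), (M + 1).choose i + M.choose j
      = 2 * ∑ i ∈ range (j + 1), M.choose i := by
  induction j with
  | zero => simp
  | succ j ih =>
    rw [sum_range_succ, sum_range_succ (fun i => M.choose i), Nat.choose_succ_succ' M j]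
    omega

/-- `n.choose j * 2 ^ (N - n)` counts the subsets of `range (N + 1)` whose `(j+1)`-st smallest
element is `n`. -/
lemma sum_choose_mul_two_pow_add_two_mul_sum_choose (N j : ℕ) :
    ∑ n ∈ range N, n.choose j * 2 ^ (N - n) + 2 * ∑ i ∈ range (j + 1), N.choose i
      = 2 ^ (N + 1) := by
  induction N with
  | zero => simp [sum_range_succ']
  | succ N ih =>
    have hdouble : ∑ n ∈ range N, n.choose j * 2 ^ (N + 1 - n)
        = 2 * ∑ n ∈ range N, n.choose j * 2 ^ (N - n) := by
      rw [mul_sum]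
      refine sum_congr rfl fun n hn => ?_
      rw [Nat.sub_add_comm (mem_range.mp hn).le, pow_succ]
      ring
    have hpascal := sum_range_choose_succ_add_choose N j
    rw [sum_range_succ, hdouble, Nat.add_sub_cancel_left, pow_succ 2 (N + 1)]
    omega

lemma sum_choose_mul_four_pow_le (m j : ℕ) :
    ∑ s ∈ Icc 1 m, (2 * s - 1).choose j * 4 ^ (m - s) ≤ 4 ^ m := by
  have hodd : 2 * ∑ s ∈ Icc 1 m, (2 * s - 1).choose j * 4 ^ (m - s)
      = ∑ n ∈ (Icc 1 m).image (2 * · - 1), n.choose j * 2 ^ (2 * m - n) := by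
    rw [sum_image (by intro a ha b hb hab; simp only [coe_Icc, Set.mem_Icc] at ha hb hab; omega),
      mul_sum]
    refine sum_congr rfl fun s hs => ?_
    have hs := mem_Icc.mp hs
    rw [show 2 * m - (2 * s - 1) = 2 * (m - s) + 1 by omega, pow_succ, pow_mul]
    ring
  have hsub : (Icc 1 m).image (2 * · - 1) ⊆ range (2 * m) := by
    intro n hn
    simp only [mem_image, mem_Icc] at hn
    simp only [mem_range]
    omega
  have hall := sum_choose_mul_two_pow_add_two_mul_sum_choose (2 * m) j
  have : 2 * ∑ s ∈ Icc 1 m, (2 * s - 1).choose j * 4 ^ (m - s) ≤ 2 * 4 ^ m := by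
    rw [hodd, show 2 * 4 ^ m = 2 ^ (2 * m + 1) by rw [pow_succ, pow_mul]; ring]
    exact (sum_le_sum_of_subset hsub).trans (by omega)
  omega

lemma trec_le_four_pow (k r : ℕ) : trec k r ≤ 4 ^ (k - r) := by
  induction k using Nat.strong_induction_on generalizing r with
  | _ k ih =>
  by_cases h : r = 0 ∨ k < r
  · simp [trec_eq_zero h]
  obtain rfl | hk : k = 1 ∨ 2 ≤ k := by omega
  · obtain rfl : r = 1 := by omega
    simp [trec_one_one]
  rw [trec_eq_sum hk (by omega) (by omega)]
  calc ∑ s ∈ Icc 1 k, trec (k - r) s * (2 * s - 1).choose (r - 1)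
      = ∑ s ∈ Icc 1 (k - r), trec (k - r) s * (2 * s - 1).choose (r - 1) := by
        refine (sum_subset (Icc_subset_Icc_right (by omega)) fun s _ hs => ?_).symm
        simp only [mem_Icc, not_and, not_le] at hs
        rw [trec_eq_zero (by omega), zero_mul]
    _ ≤ ∑ s ∈ Icc 1 (k - r), (2 * s - 1).choose (r - 1) * 4 ^ (k - r - s) :=
        sum_le_sum fun s _ => by rw [mul_comm]; exact Nat.mul_le_mul_left _ (ih _ (by omega) s)
    _ ≤ 4 ^ (k - r) := sum_choose_mul_four_pow_le _ _

lemma trec_mul_choose_le {k r s : ℕ} (hr : 1 ≤ r) :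
    trec (k - r) s * (2 * s - 1).choose (r - 1) ≤ trec k r := by
  rcases eq_or_ne (trec (k - r) s) 0 with h | h
  · simp [h]
  obtain ⟨hs, hsk⟩ := one_le_and_le_of_trec_ne_zero h
  rw [trec_eq_sum (by omega) hr (by omega)]
  exact single_le_sum (f := fun s => trec (k - r) s * (2 * s - 1).choose (r - 1))
    (fun _ _ => Nat.zero_le _) (mem_Icc.mpr ⟨hs, by omega⟩)

lemma trec_le_trec_succ_one (k s : ℕ) : trec k s ≤ trec (k + 1) 1 := by
  simpa using trec_mul_choose_le (k := k + 1) (s := s) le_rfl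

lemma monotone_trec_one : Monotone (trec · 1) :=
  monotone_nat_of_le_succ fun k => trec_le_trec_succ_one k 1

lemma exists_trec_pos {r : ℕ} (hr : 1 ≤ r) : ∃ d, 0 < trec d r := by
  induction r using Nat.strong_induction_on with
  | _ r ih =>
  obtain rfl | hr2 : r = 1 ∨ 2 ≤ r := by omega
  · exact ⟨1, by simp [trec_one_one]⟩
  obtain ⟨d, hd⟩ := ih ((r + 1) / 2) (by omega) (by omega)
  refine ⟨d + r, lt_of_lt_of_le ?_ (trec_mul_choose_le (s := (r + 1) / 2) (by omega))⟩
  rw [Nat.add_sub_cancel]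
  exact Nat.mul_pos hd (Nat.choose_pos (by omega))

lemma trec_mul_choose_pow_le {r : ℕ} (d m : ℕ) (hr : 1 ≤ r) :
    trec d r * (2 * r - 1).choose (r - 1) ^ m ≤ trec (d + m * r) r := by
  induction m with
  | zero => simp
  | succ m ih =>
    calc trec d r * (2 * r - 1).choose (r - 1) ^ (m + 1)
        = trec d r * (2 * r - 1).choose (r - 1) ^ m * (2 * r - 1).choose (r - 1) := by ring
      _ ≤ trec (d + m * r + r - r) r * (2 * r - 1).choose (r - 1) := by
        rw [Nat.add_sub_cancel]; exact Nat.mul_le_mul_right _ ih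
      _ ≤ trec (d + (m + 1) * r) r := by
        rw [add_one_mul, ← add_assoc]; exact trec_mul_choose_le hr

lemma exists_choose_pow_le_trec_one {r : ℕ} (hr : 1 ≤ r) :
    ∃ d, ∀ m, (2 * r - 1).choose (r - 1) ^ m ≤ trec (d + m * r) 1 := by
  obtain ⟨d, hd⟩ := exists_trec_pos hr
  refine ⟨d + 1, fun m => ?_⟩
  calc (2 * r - 1).choose (r - 1) ^ m
      ≤ trec d r * (2 * r - 1).choose (r - 1) ^ m := Nat.le_mul_of_pos_left _ hd
    _ ≤ trec (d + m * r) r := trec_mul_choose_pow_le d m hr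
    _ ≤ trec (d + 1 + m * r) 1 := by
      rw [add_right_comm]; exact trec_le_trec_succ_one _ _

lemma cconst_nonneg (k : ℕ) : 0 ≤ cconst k :=
  sum_nonneg fun _ _ => by positivity

lemma cconst_le (k : ℕ) : cconst k ≤ k * 4 ^ k := by
  calc cconst k ≤ ∑ _r ∈ Icc 1 k, (4 : ℚ) ^ k := by
        refine sum_le_sum fun r hr => ?_
        have hr := mem_Icc.mp hr
        have htrec : (trec k r : ℚ) ≤ 4 ^ k := by
          exact_mod_cast (trec_le_four_pow k r).trans (Nat.pow_le_pow_right (by norm_num) (by omega))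
        exact (div_le_self (by positivity) (by exact_mod_cast hr.1)).trans htrec
    _ = k * 4 ^ k := by simp

lemma trec_one_le_cconst (k : ℕ) : (trec k 1 : ℚ) ≤ cconst k := by
  rcases Nat.eq_zero_or_pos k with rfl | hk
  · simp [trec_eq_zero, cconst]
  simpa [cconst] using single_le_sum (f := fun r => (trec k r : ℚ) / r)
    (fun _ _ => by positivity) (mem_Icc.mpr ⟨le_rfl, hk⟩)

lemma tendsto_mul_natCast_rpow_inv {C : ℝ} (hC : 0 < C) :
    Tendsto (fun k : ℕ => (C * k) ^ (k : ℝ)⁻¹) atTop (𝓝 1) := by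
  refine ((tendsto_rpow_div_mul_add C 1 0 zero_ne_one).comp
    (tendsto_natCast_atTop_atTop.const_mul_atTop hC)).congr fun k => ?_
  rcases eq_or_ne (k : ℝ) 0 with hk | hk
  · simp [hk]
  · simp only [Function.comp_apply, one_mul, add_zero]
    field_simp

lemma eventually_rpow_inv_lt_of_le_mul_pow {x : ℕ → ℝ} {C L b : ℝ} (hC : 0 < C) (hL : 0 ≤ L)
    (hb : L < b) (hx0 : ∀ k, 0 ≤ x k) (hx : ∀ k, x k ≤ C * k * L ^ k) :
    ∀ᶠ k in atTop, x k ^ (k : ℝ)⁻¹ < b := by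
  have hlim : Tendsto (fun k : ℕ => (C * k) ^ (k : ℝ)⁻¹ * L) atTop (𝓝 L) := by
    simpa using (tendsto_mul_natCast_rpow_inv hC).mul_const L
  filter_upwards [hlim.eventually_lt_const hb, eventually_ne_atTop 0] with k hkb hk
  calc x k ^ (k : ℝ)⁻¹ ≤ (C * k * L ^ k) ^ (k : ℝ)⁻¹ :=
        rpow_le_rpow (hx0 k) (hx k) (by positivity)
    _ = (C * k) ^ (k : ℝ)⁻¹ * L := by
        rw [mul_rpow (by positivity) (by positivity), pow_rpow_inv_natCast hL hk]
    _ < b := hkb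

lemma eventually_lt_rpow_inv_of_pow_le_mul {x : ℕ → ℝ} {C L a : ℝ} (hC : 0 < C) (hL : 0 ≤ L)
    (ha : a < L) (hx : ∀ᶠ k in atTop, L ^ k ≤ C * k * x k) :
    ∀ᶠ k in atTop, a < x k ^ (k : ℝ)⁻¹ := by
  have hlim : Tendsto (fun k : ℕ => L / (C * k) ^ (k : ℝ)⁻¹) atTop (𝓝 L) := by
    have := (tendsto_const_nhds (x := L)).div (tendsto_mul_natCast_rpow_inv hC) one_ne_zero
    rwa [div_one] at this
  filter_upwards [hlim.eventually_const_lt ha, hx, eventually_gt_atTop 0] with k hak hk hk0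
  have hCk : 0 < C * k := by positivity
  have hxk : 0 ≤ x k := (mul_nonneg_iff_of_pos_left hCk).mp ((pow_nonneg hL k).trans hk)
  calc a < L / (C * k) ^ (k : ℝ)⁻¹ := hak
    _ ≤ x k ^ (k : ℝ)⁻¹ := by
      rw [div_le_iff₀ (by positivity), mul_comm, ← mul_rpow hCk.le hxk]
      calc L = (L ^ k) ^ (k : ℝ)⁻¹ := (pow_rpow_inv_natCast hL hk0.ne').symm
        _ ≤ (C * k * x k) ^ (k : ℝ)⁻¹ := rpow_le_rpow (by positivity) hk (by positivity)

lemma four_pow_le_mul_choose {r : ℕ} (hr : 0 < r) :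
    4 ^ r ≤ 4 * r * (2 * r - 1).choose (r - 1) := by
  obtain ⟨q, rfl⟩ : ∃ q, r = q + 1 := ⟨r - 1, by omega⟩
  have hcentral : (q + 1).centralBinom = 2 * (2 * q + 1).choose q := by
    rw [Nat.centralBinom_eq_two_mul_choose, show 2 * (q + 1) = 2 * q + 1 + 1 by ring,
      Nat.choose_succ_succ', Nat.choose_symm_half]
    ring
  calc 4 ^ (q + 1) ≤ 2 * (q + 1) * (q + 1).centralBinom :=
        Nat.four_pow_le_two_mul_self_mul_centralBinom _ hr
    _ = 4 * (q + 1) * (2 * (q + 1) - 1).choose (q + 1 - 1) := by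
        rw [hcentral, show 2 * (q + 1) - 1 = 2 * q + 1 by omega, Nat.add_sub_cancel]
        ring

lemma eventually_lt_choose_rpow_inv {a : ℝ} (ha : a < 4) :
    ∀ᶠ r : ℕ in atTop, a < ((2 * r - 1).choose (r - 1) : ℝ) ^ (r : ℝ)⁻¹ := by
  refine eventually_lt_rpow_inv_of_pow_le_mul four_pos zero_le_four ha ?_
  filter_upwards [eventually_gt_atTop 0] with r hr
  exact_mod_cast four_pow_le_mul_choose hr

lemma exists_pow_le_mul_cconst {r : ℕ} (hr : 1 ≤ r) :
    ∃ C > 0, ∀ᶠ k in atTop,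
      (((2 * r - 1).choose (r - 1) : ℝ) ^ (r : ℝ)⁻¹) ^ k ≤ C * k * cconst k := by
  set B := (2 * r - 1).choose (r - 1)
  set β : ℝ := (B : ℝ) ^ (r : ℝ)⁻¹
  have hβ : 1 ≤ β := one_le_rpow (by exact_mod_cast Nat.choose_pos (by omega)) (by positivity)
  have hβr : β ^ r = B := rpow_inv_natCast_pow (by positivity) (by omega)
  obtain ⟨d, hd⟩ := exists_choose_pow_le_trec_one hr
  refine ⟨β ^ (d + r), by positivity, ?_⟩
  filter_upwards [eventually_ge_atTop (d + 1)] with k hk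
  obtain ⟨m, hkm, hmk⟩ : ∃ m, k ≤ d + r + m * r ∧ d + m * r ≤ k := by
    have := Nat.div_add_mod' (k - d) r
    have := Nat.mod_lt (k - d) (show r > 0 by omega)
    exact ⟨(k - d) / r, by omega, by omega⟩
  have hBm : ((B ^ m : ℕ) : ℚ) ≤ cconst k :=
    (Nat.cast_le.mpr ((hd m).trans (monotone_trec_one hmk))).trans (trec_one_le_cconst k)
  calc β ^ k ≤ β ^ (d + r + m * r) := pow_le_pow_right₀ hβ hkm
    _ = β ^ (d + r) * B ^ m := by rw [pow_add, mul_comm m r, pow_mul, hβr]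
    _ ≤ β ^ (d + r) * cconst k := by gcongr; exact_mod_cast hBm
    _ ≤ β ^ (d + r) * k * cconst k := by
        rw [mul_assoc]
        gcongr
        exact le_mul_of_one_le_left (by exact_mod_cast cconst_nonneg k)
          (by exact_mod_cast (by omega : 1 ≤ k))

/-- `c(k)^{1/k} → 4` as `k → ∞` (real `k`-th roots). -/
theorem tendsto_rpow_cconst :
    Filter.Tendsto (fun k : ℕ => ((cconst k : ℝ)) ^ ((k : ℝ)⁻¹)) Filter.atTop
      (nhds 4) := by
  rw [tendsto_order]
  refine ⟨fun a ha => ?_, fun b hb => ?_⟩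
  · obtain ⟨r, har, hr⟩ :=
      ((eventually_lt_choose_rpow_inv ha).and (eventually_ge_atTop 1)).exists
    obtain ⟨C, hC, hcconst⟩ := exists_pow_le_mul_cconst hr
    exact eventually_lt_rpow_inv_of_pow_le_mul hC (by positivity) har hcconst
  · refine eventually_rpow_inv_lt_of_le_mul_pow one_pos zero_le_four hb
      (fun k => by exact_mod_cast cconst_nonneg k) (fun k => ?_)
    simpa using (Rat.cast_le (K := ℝ)).mpr (cconst_le k)
end

section
/- For every integer k ≥ 1, the rational number c(k) is strictly smaller than 4^k. -/
/-- Pascal-type sum identity: `∑_{i≤j} C(N+1,i) + C(N,j) = 2 ∑_{i≤j} C(N,i)`. -/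
lemma pascal_sum (N j : ℕ) :
    ∑ i ∈ Finset.range (j + 1), Nat.choose (N + 1) i + Nat.choose N j
      = 2 * ∑ i ∈ Finset.range (j + 1), Nat.choose N i := by
  induction j with
  | zero => simp
  | succ j ih =>
    rw [Finset.sum_range_succ, Finset.sum_range_succ (f := fun i => Nat.choose N i)]
    have := Nat.choose_succ_succ' N j
    omega

/-- Key bound: `∑_{s=1}^m C(2s-1,j) 4^{m-s} + ∑_{i≤j} C(2m,i) ≤ 4^m`. -/
lemma lemB (j : ℕ) : ∀ m : ℕ,
    ∑ s ∈ Finset.Icc 1 m, Nat.choose (2 * s - 1) j * 4 ^ (m - s)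
      + ∑ i ∈ Finset.range (j + 1), Nat.choose (2 * m) i ≤ 4 ^ m := by
  intro m
  induction m with
  | zero =>
    simp [Finset.sum_range_succ']
  | succ m ih =>
    rw [Finset.sum_Icc_succ_top (by omega)]
    have hsum : ∑ s ∈ Finset.Icc 1 m, Nat.choose (2 * s - 1) j * 4 ^ (m + 1 - s)
        = 4 * ∑ s ∈ Finset.Icc 1 m, Nat.choose (2 * s - 1) j * 4 ^ (m - s) := by
      rw [Finset.mul_sum]
      apply Finset.sum_congr rfl
      intro s hs
      simp only [Finset.mem_Icc] at hs
      have : m + 1 - s = (m - s) + 1 := by omega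
      rw [this, pow_succ]
      ring
    have h1 := pascal_sum (2 * m) j
    have h2 := pascal_sum (2 * m + 1) j
    have e1 : 2 * (m + 1) = 2 * m + 1 + 1 := by omega
    rw [hsum, e1]
    have e3 : 4 ^ (m + 1) = 4 * 4 ^ m := by ring
    rw [e3]
    simp only [Nat.add_sub_cancel, Nat.sub_self, pow_zero, mul_one]
    omega

/-- Pointwise bound `t(k,r) ≤ 4^(k-r)`. -/
lemma trec_le (k : ℕ) : ∀ r, trec k r ≤ 4 ^ (k - r) := by
  induction k using Nat.strong_induction_on with
  | _ k ih =>
    intro r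
    rw [trec]
    split
    · exact Nat.zero_le _
    · next h =>
      push_neg at h
      split
      · split
        · exact Nat.one_le_pow _ _ (by norm_num)
        · exact Nat.zero_le _
      · next hk1 =>
        have hr1 : 1 ≤ r := by omega
        have hrk : r ≤ k := h.2
        calc ∑ s ∈ Finset.Icc 1 k, trec (k - r) s * Nat.choose (2 * s - 1) (r - 1)
            = ∑ s ∈ Finset.Icc 1 (k - r), trec (k - r) s * Nat.choose (2 * s - 1) (r - 1) := by
              symm
              apply Finset.sum_subset
              · apply Finset.Icc_subset_Icc_right; omega
              · intro s hs hns
                simp only [Finset.mem_Icc] at hs hns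
                have hz : trec (k - r) s = 0 := by
                  rw [trec]; exact dif_pos (by omega)
                simp [hz]
          _ ≤ ∑ s ∈ Finset.Icc 1 (k - r), Nat.choose (2 * s - 1) (r - 1) * 4 ^ (k - r - s) := by
              apply Finset.sum_le_sum
              intro s hs
              rw [mul_comm]
              exact Nat.mul_le_mul_left _ (ih (k - r) (by omega) s)
          _ ≤ 4 ^ (k - r) := le_trans (Nat.le_add_right _ _) (lemB (r - 1) (k - r))

lemma geomsum_lt4 (k : ℕ) : ∑ j ∈ Finset.range k, 4 ^ j < 4 ^ k := by
  induction k with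
  | zero => simp
  | succ k ih =>
    rw [Finset.sum_range_succ, pow_succ]
    omega

/-- For every `k ≥ 1`, `c(k) < 4^k`. -/
theorem cconst_lt_four_pow (k : ℕ) (hk : 1 ≤ k) : cconst k < (4 : ℚ) ^ k := by
  have h1 : cconst k ≤ ((∑ r ∈ Finset.Icc 1 k, trec k r : ℕ) : ℚ) := by
    rw [Nat.cast_sum]
    apply Finset.sum_le_sum
    intro r hr
    simp only [Finset.mem_Icc] at hr
    apply div_le_self (by positivity)
    exact_mod_cast hr.1
  have h2 : ∑ r ∈ Finset.Icc 1 k, trec k r < 4 ^ k := by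
    calc ∑ r ∈ Finset.Icc 1 k, trec k r
        ≤ ∑ r ∈ Finset.Icc 1 k, 4 ^ (k - r) :=
          Finset.sum_le_sum fun r _ => trec_le k r
      _ = ∑ j ∈ Finset.range k, 4 ^ j := by
          apply Finset.sum_nbij' (i := fun r => k - r) (j := fun j => k - j)
          · intro r hr; simp only [Finset.mem_Icc] at hr; simp only [Finset.mem_range]; omega
          · intro j hj; simp only [Finset.mem_range] at hj; simp only [Finset.mem_Icc]; omega
          · intro r hr; simp only [Finset.mem_Icc] at hr; omega
          · intro j hj; simp only [Finset.mem_range] at hj; omega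
          · intro r hr; rfl
      _ < 4 ^ k := geomsum_lt4 k
  calc cconst k ≤ _ := h1
    _ < (4 : ℚ) ^ k := by exact_mod_cast h2
end

section
/- Let G be a simple graph on a (possibly infinite) vertex set that is connected and acyclic and in which every vertex has exactly 3 neighbors. Then for every integer k ≥ 1 and every vertex v of G, the collection of k-element sets S of vertices with v ∈ S whose induced subgraph is connected is finite, and its cardinality equals catalan(k+1) − catalan(k). -/
/-!
Deleting an edge `cd` of a tree leaves two branches, one at `c` and one at `d`, and a connected
vertex set through `c` is, uniquely, a connected set through `c` on `c`'s side together with a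
possibly empty connected set through `d` on `d`'s side. In the 3-regular tree the branch at `d`
away from `c` is a rooted binary tree: `d` has exactly two further neighbours `e₁, e₂`, and
splitting off their branches shows that the number `u n` of possibly empty connected `n`-sets of
that branch which contain `d` when nonempty satisfies `u 0 = 1` and
`u (n + 1) = ∑_{i + j = n} u i * u j`, so `u n = catalan n`. Splitting the whole tree along an
edge `vu` then counts the connected `k`-sets through `v` as
`∑_{i + j = k, i ≥ 1} catalan i * catalan j = catalan (k + 1) - catalan k`.
-/

open Finset

theorem encard_sep_eq_sum_antidiagonal_of_bijOn {α β γ : Type*} {A : Set α} {B : Set β}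
    {C : Set γ} {f : α × β → γ} (hf : Set.BijOn f (A ×ˢ B) C) {a : α → ℕ} {b : β → ℕ}
    {c : γ → ℕ} (hc : ∀ p ∈ A ×ˢ B, c (f p) = a p.1 + b p.2) (n : ℕ) :
    {z ∈ C | c z = n}.encard =
      ∑ q ∈ antidiagonal n, {x ∈ A | a x = q.1}.encard * {y ∈ B | b y = q.2}.encard := by
  have hsplit : {p ∈ A ×ˢ B | a p.1 + b p.2 = n} =
      ⋃ q ∈ (antidiagonal n : Set (ℕ × ℕ)), {x ∈ A | a x = q.1} ×ˢ {y ∈ B | b y = q.2} := by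
    ext p
    simp only [Set.mem_sep_iff, Set.mem_prod, Set.mem_iUnion, mem_coe,
      HasAntidiagonal.mem_antidiagonal, exists_prop]
    constructor
    · rintro ⟨⟨hpA, hpB⟩, hn⟩
      exact ⟨(a p.1, b p.2), hn, ⟨hpA, rfl⟩, hpB, rfl⟩
    · rintro ⟨q, rfl, ⟨hpA, h₁⟩, hpB, h₂⟩
      exact ⟨⟨hpA, hpB⟩, by rw [h₁, h₂]⟩
  have himage : {z ∈ C | c z = n} = f '' {p ∈ A ×ˢ B | a p.1 + b p.2 = n} := by
    ext z
    constructor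
    · rintro ⟨hz, rfl⟩
      obtain ⟨p, hp, rfl⟩ := hf.surjOn hz
      exact ⟨p, ⟨hp, (hc p hp).symm⟩, rfl⟩
    · rintro ⟨p, ⟨hp, hn⟩, rfl⟩
      exact ⟨hf.mapsTo hp, (hc p hp).trans hn⟩
  have hdisj : (antidiagonal n : Set (ℕ × ℕ)).PairwiseDisjoint
      fun q => {x ∈ A | a x = q.1} ×ˢ {y ∈ B | b y = q.2} := by
    intro q _ q' _ hqq'
    refine Set.disjoint_left.mpr fun p hp hp' => hqq' ?_
    exact Prod.ext (hp.1.2.symm.trans hp'.1.2) (hp.2.2.symm.trans hp'.2.2)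
  rw [himage, (hf.injOn.mono (Set.sep_subset _ _)).encard_image, hsplit,
    (Finset.finite_toSet _).encard_biUnion hdisj, finsum_mem_coe_finset]
  simp_rw [Set.encard_prod]

lemma sum_antidiagonal_catalan_succ_mul (n : ℕ) :
    ∑ q ∈ antidiagonal n, catalan (q.1 + 1) * catalan q.2 =
      catalan (n + 1 + 1) - catalan (n + 1) := by
  rw [catalan_succ' (n + 1), Nat.sum_antidiagonal_succ]
  simp [catalan_zero]

namespace SimpleGraph

variable {V : Type*} {G : SimpleGraph V} {b c d e e₁ e₂ u v x y : V}

/-- When `G` is a tree and `c ~ d`, the vertices of the component of `d` in `G` minus the edge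
`cd`. -/
def branch (G : SimpleGraph V) (d c : V) : Set V :=
  {x | ∃ p : G.Walk d x, s(d, c) ∉ p.edges}

lemma mem_branch_self : d ∈ G.branch d c := ⟨.nil, by simp⟩

lemma Walk.mem_edges_of_mem_branch_of_notMem_branch (p : G.Walk x y) (hx : x ∈ G.branch c d)
    (hy : y ∉ G.branch c d) : s(c, d) ∈ p.edges := by
  by_contra hp
  obtain ⟨q, hq⟩ := hx
  exact hy ⟨q.append p, by simp [hq, hp]⟩

lemma notMem_branch_of_adj (hacyc : G.IsAcyclic) (hcd : G.Adj c d) : c ∉ G.branch d c :=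
  fun ⟨p, hp⟩ => hp (isBridge_iff_forall_walk_mem_edges.mp
    (isAcyclic_iff_forall_adj_isBridge.mp hacyc hcd.symm) p)

lemma disjoint_branch (hacyc : G.IsAcyclic) (hcd : G.Adj c d) :
    Disjoint (G.branch c d) (G.branch d c) := by
  refine Set.disjoint_left.mpr fun x ⟨p, hp⟩ hx => hp ?_
  have := p.reverse.mem_edges_of_mem_branch_of_notMem_branch hx (notMem_branch_of_adj hacyc hcd)
  rwa [Walk.edges_reverse, List.mem_reverse, Sym2.eq_swap] at this

lemma branch_union_branch (hconn : G.Preconnected) (c d : V) :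
    G.branch c d ∪ G.branch d c = Set.univ := by
  suffices h : ∀ {y z}, G.Walk y z → y ∈ G.branch c d ∪ G.branch d c →
      z ∈ G.branch c d ∪ G.branch d c from
    Set.eq_univ_of_forall fun x => h (hconn c x).some (.inl mem_branch_self)
  intro y z p
  induction p with
  | nil => exact id
  | @cons y z _ hyz _ ih =>
    refine fun hy => ih ?_
    by_cases he : s(y, z) = s(c, d)
    · rcases Sym2.eq_iff.mp he with ⟨-, rfl⟩ | ⟨-, rfl⟩
      exacts [.inr mem_branch_self, .inl mem_branch_self]
    · rcases hy with ⟨q, hq⟩ | ⟨q, hq⟩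
      · exact .inl ⟨q.concat hyz, by simp [hq, Ne.symm he]⟩
      · rw [Sym2.eq_swap] at hq
        exact .inr ⟨q.concat hyz, by simp [hq, Sym2.eq_swap, Ne.symm he]⟩

lemma exists_adj_mem_branch (hx : x ∈ G.branch d c) (hxd : x ≠ d) :
    ∃ b, G.Adj d b ∧ b ≠ c ∧ x ∈ G.branch b d := by
  classical
  obtain ⟨p, hp⟩ := hx
  have hpath := p.bypass_isPath
  have hedges : s(d, c) ∉ p.bypass.edges := fun h => hp (p.edges_bypass_subset_edges h)
  cases hq : p.bypass with
  | nil => exact absurd rfl hxd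
  | @cons _ b _ hdb q =>
    rw [hq] at hpath hedges
    refine ⟨b, hdb, fun hbc => by simp [hbc] at hedges, q, fun h => ?_⟩
    exact (Walk.cons_isPath_iff _ _).mp hpath |>.2 (q.snd_mem_support_of_mem_edges h)

lemma branch_subset_branch (hacyc : G.IsAcyclic) (hdb : G.Adj d b) (hbc : b ≠ c) :
    G.branch b d ⊆ G.branch d c := by
  classical
  rintro x ⟨p, hp⟩
  refine ⟨.cons hdb p, ?_⟩
  have hd : d ∉ p.support := fun hd => hp (p.edges_takeUntil_subset_edges hd
    ((p.takeUntil d hd).mem_edges_of_mem_branch_of_notMem_branch mem_branch_self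
      (notMem_branch_of_adj hacyc hdb)))
  simp only [Walk.edges_cons, List.mem_cons, not_or]
  exact ⟨by simp [Ne.symm hbc, hdb.ne], fun h => hd (p.fst_mem_support_of_mem_edges h)⟩

lemma Walk.IsPath.support_subset_branch {p : G.Walk x y} (hp : p.IsPath)
    (hx : x ∈ G.branch c d) (hy : y ∈ G.branch c d) : ∀ z ∈ p.support, z ∈ G.branch c d := by
  classical
  intro z hz
  by_contra hzb
  have h₁ := (p.takeUntil z hz).mem_edges_of_mem_branch_of_notMem_branch hx hzb
  have h₂ := (p.dropUntil z hz).reverse.mem_edges_of_mem_branch_of_notMem_branch hy hzb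
  rw [Walk.edges_reverse, List.mem_reverse] at h₂
  have hnodup := hp.isTrail.edges_nodup
  rw [← p.take_spec hz, Walk.edges_append, List.nodup_append] at hnodup
  exact hnodup.2.2 _ h₁ _ h₂ rfl

lemma exists_isPath_support_subset {s : Set V} (hs : (G.induce s).Preconnected) (hx : x ∈ s)
    (hy : y ∈ s) : ∃ p : G.Walk x y, p.IsPath ∧ ∀ z ∈ p.support, z ∈ s := by
  classical
  obtain ⟨q⟩ := hs ⟨x, hx⟩ ⟨y, hy⟩
  let p := q.map (Embedding.induce s).toHom
  refine ⟨p.bypass, p.bypass_isPath, fun z hz => ?_⟩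
  obtain ⟨⟨w, hw⟩, -, rfl⟩ :=
    List.mem_map.mp (Walk.support_map _ _ ▸ p.support_bypass_subset_support hz)
  exact hw

lemma Connected.induce_inter_branch {s : Set V} (hs : (G.induce s).Connected)
    (hx : x ∈ s ∩ G.branch c d) : (G.induce (s ∩ G.branch c d)).Connected := by
  refine induce_connected_of_patches x hx fun {y} hy => ?_
  obtain ⟨p, hp, hps⟩ := exists_isPath_support_subset hs.preconnected hx.1 hy.1
  exact ⟨{z | z ∈ p.support}, fun z hz => ⟨hps z hz, hp.support_subset_branch hx.2 hy.2 z hz⟩,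
    p.start_mem_support, p.end_mem_support, p.connected_induce_support.preconnected _ _⟩

lemma Connected.mem_of_notMem_branch {s : Set V} (hs : (G.induce s).Connected) (hc : c ∈ s)
    (hx : x ∈ s) (hxb : x ∉ G.branch c d) : d ∈ s := by
  obtain ⟨p, -, hps⟩ := exists_isPath_support_subset hs.preconnected hc hx
  exact hps d (p.snd_mem_support_of_mem_edges
    (p.mem_edges_of_mem_branch_of_notMem_branch mem_branch_self hxb))

def rootedSubtrees (G : SimpleGraph V) (r : V) (Q : Set V) : Set (Finset V) :=
  {S | r ∈ S ∧ ↑S ⊆ Q ∧ (G.induce (S : Set V)).Connected}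

/-- `∅` is included so that splitting along an edge is a bijection onto a product. -/
def branchSubtrees (G : SimpleGraph V) (d c : V) : Set (Finset V) :=
  insert ∅ (G.rootedSubtrees d (G.branch d c))

lemma coe_subset_branch_of_mem_branchSubtrees {S : Finset V} (hS : S ∈ G.branchSubtrees d c) :
    ↑S ⊆ G.branch d c := by
  rcases hS with rfl | hS
  exacts [by simp, hS.2.1]

lemma union_mem_rootedSubtrees [DecidableEq V] (hcd : G.Adj c d) {Q : Set V}
    {S₁ S₂ : Finset V} (h₁ : S₁ ∈ G.rootedSubtrees c Q) (h₂ : S₂ ∈ G.branchSubtrees d c) :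
    S₁ ∪ S₂ ∈ G.rootedSubtrees c (Q ∪ G.branch d c) := by
  obtain ⟨hc, hS₁Q, hS₁conn⟩ := h₁
  rcases h₂ with rfl | ⟨hd, hS₂b, hS₂conn⟩
  · rw [union_empty]
    exact ⟨hc, hS₁Q.trans Set.subset_union_left, hS₁conn⟩
  refine ⟨mem_union_left _ hc, ?_, ?_⟩ <;> rw [coe_union]
  · exact Set.union_subset_union hS₁Q hS₂b
  · exact connected_induce_union hS₁conn.preconnected hS₂conn.preconnected hc hd hcd

lemma filter_mem_rootedSubtrees (hacyc : G.IsAcyclic) (hcd : G.Adj c d) {Q : Set V}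
    [DecidablePred (· ∈ G.branch c d)] {S : Finset V}
    (hS : S ∈ G.rootedSubtrees c (Q ∪ G.branch d c)) :
    S.filter (· ∈ G.branch c d) ∈ G.rootedSubtrees c Q := by
  obtain ⟨hcS, hSQ, hSconn⟩ := hS
  refine ⟨mem_filter.mpr ⟨hcS, mem_branch_self⟩, fun x hx => ?_, ?_⟩
  · obtain ⟨hxS, hxb⟩ := mem_filter.mp hx
    exact (hSQ hxS).resolve_right (Set.disjoint_left.mp (disjoint_branch hacyc hcd) hxb)
  · rw [coe_filter]
    exact hSconn.induce_inter_branch ⟨hcS, mem_branch_self⟩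

lemma filter_mem_branchSubtrees (hacyc : G.IsAcyclic) (hcd : G.Adj c d) {Q : Set V}
    [DecidablePred (· ∈ G.branch d c)] {S : Finset V} (hS : S ∈ G.rootedSubtrees c Q) :
    S.filter (· ∈ G.branch d c) ∈ G.branchSubtrees d c := by
  obtain ⟨hcS, -, hSconn⟩ := hS
  rcases (S.filter (· ∈ G.branch d c)).eq_empty_or_nonempty with h | ⟨x, hx⟩
  · exact .inl h
  obtain ⟨hxS, hxb⟩ := mem_filter.mp hx
  have hdS : d ∈ S :=
    hSconn.mem_of_notMem_branch hcS hxS (Set.disjoint_right.mp (disjoint_branch hacyc hcd) hxb)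
  refine .inr ⟨mem_filter.mpr ⟨hdS, mem_branch_self⟩, fun y hy => (mem_filter.mp hy).2, ?_⟩
  rw [coe_filter]
  exact hSconn.induce_inter_branch ⟨hdS, mem_branch_self⟩

lemma bijOn_union_rootedSubtrees [DecidableEq V] (hacyc : G.IsAcyclic) (hcd : G.Adj c d)
    {Q : Set V} (hQ : Q ⊆ G.branch c d) :
    Set.BijOn (fun p : Finset V × Finset V => p.1 ∪ p.2)
      (G.rootedSubtrees c Q ×ˢ G.branchSubtrees d c)
      (G.rootedSubtrees c (Q ∪ G.branch d c)) := by
  classical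
  have hdisj := disjoint_branch hacyc hcd
  refine Set.InvOn.bijOn
    (f' := fun S => (S.filter (· ∈ G.branch c d), S.filter (· ∈ G.branch d c)))
    ⟨fun ⟨S₁, S₂⟩ ⟨h₁, h₂⟩ => ?_, fun S hS => ?_⟩
    (fun _ ⟨h₁, h₂⟩ => union_mem_rootedSubtrees hcd h₁ h₂)
    (fun _ hS => ⟨filter_mem_rootedSubtrees hacyc hcd hS, filter_mem_branchSubtrees hacyc hcd hS⟩)
  · have hS₁ : ∀ x ∈ S₁, x ∈ G.branch c d := fun x hx => hQ (h₁.2.1 hx)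
    have hS₂ : ∀ x ∈ S₂, x ∈ G.branch d c :=
      fun x hx => coe_subset_branch_of_mem_branchSubtrees h₂ hx
    simp only [filter_union, Prod.mk.injEq]
    rw [filter_true_of_mem hS₁, filter_true_of_mem hS₂,
      filter_false_of_mem fun x hx => Set.disjoint_right.mp hdisj (hS₂ x hx),
      filter_false_of_mem fun x hx => Set.disjoint_left.mp hdisj (hS₁ x hx)]
    simp
  · dsimp only
    rw [← filter_or, filter_true_of_mem]
    exact fun x hx => (hS.2.1 hx).imp_left (hQ ·)

lemma encard_rootedSubtrees_union (hacyc : G.IsAcyclic) (hcd : G.Adj c d)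
    {Q : Set V} (hQ : Q ⊆ G.branch c d) (n : ℕ) :
    {S ∈ G.rootedSubtrees c (Q ∪ G.branch d c) | S.card = n}.encard =
      ∑ q ∈ antidiagonal n, {S ∈ G.rootedSubtrees c Q | S.card = q.1}.encard *
        {S ∈ G.branchSubtrees d c | S.card = q.2}.encard := by
  classical
  exact encard_sep_eq_sum_antidiagonal_of_bijOn (bijOn_union_rootedSubtrees hacyc hcd hQ)
    (fun _ ⟨h₁, h₂⟩ => card_union_of_disjoint <| disjoint_coe.mp <|
      (disjoint_branch hacyc hcd).mono (h₁.2.1.trans hQ)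
        (coe_subset_branch_of_mem_branchSubtrees h₂)) n

lemma rootedSubtrees_sep_card_zero {r : V} {Q : Set V} :
    {S ∈ G.rootedSubtrees r Q | S.card = 0} = ∅ :=
  Set.eq_empty_of_forall_notMem fun S ⟨hS, h0⟩ => by
    rw [card_eq_zero.mp h0] at hS
    exact notMem_empty r hS.1

lemma branchSubtrees_sep_card_zero : {S ∈ G.branchSubtrees d c | S.card = 0} = {∅} := by
  ext S
  refine ⟨fun hS => card_eq_zero.mp hS.2, ?_⟩
  rintro rfl
  exact ⟨Set.mem_insert _ _, card_empty⟩

lemma branchSubtrees_sep_card_succ (n : ℕ) :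
    {S ∈ G.branchSubtrees d c | S.card = n + 1} =
      {S ∈ G.rootedSubtrees d (G.branch d c) | S.card = n + 1} := by
  ext S
  simp +contextual [branchSubtrees, or_and_right]

lemma rootedSubtrees_singleton (r : V) : G.rootedSubtrees r {r} = {{r}} := by
  ext S
  refine ⟨fun ⟨hr, hS, _⟩ => eq_singleton_iff_unique_mem.mpr ⟨hr, fun x hx => hS hx⟩, ?_⟩
  rintro rfl
  exact ⟨mem_singleton_self r, by simp, by rw [coe_singleton]; exact .of_subsingleton⟩

lemma exists_neighborSet_sdiff_eq_pair (hd : (G.neighborSet d).ncard = 3) (hdc : G.Adj d c) :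
    ∃ e₁ e₂, e₁ ≠ e₂ ∧ G.neighborSet d \ {c} = {e₁, e₂} :=
  Set.ncard_eq_two.mp <| by
    rw [Set.ncard_sdiff_singleton_of_mem (show c ∈ G.neighborSet d from hdc), hd]

lemma branch_eq_insert_union (hacyc : G.IsAcyclic) (h : G.neighborSet d \ {c} = {e₁, e₂}) :
    G.branch d c = insert d (G.branch e₁ d) ∪ G.branch e₂ d := by
  have hnbr {b : V} : G.Adj d b ∧ b ≠ c ↔ b = e₁ ∨ b = e₂ := Set.ext_iff.mp h b
  obtain ⟨he₁, he₁c⟩ := hnbr.mpr (.inl rfl)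
  obtain ⟨he₂, he₂c⟩ := hnbr.mpr (.inr rfl)
  refine subset_antisymm (fun x hx => ?_) (Set.union_subset
    (Set.insert_subset mem_branch_self (branch_subset_branch hacyc he₁ he₁c))
    (branch_subset_branch hacyc he₂ he₂c))
  by_cases hxd : x = d
  · exact .inl (.inl hxd)
  obtain ⟨b, hdb, hbc, hxb⟩ := exists_adj_mem_branch hx hxd
  rcases hnbr.mp ⟨hdb, hbc⟩ with rfl | rfl
  exacts [.inl (.inr hxb), .inr hxb]

lemma encard_rootedSubtrees_insert_branch (hacyc : G.IsAcyclic) (hde : G.Adj d e) (n : ℕ) :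
    {S ∈ G.rootedSubtrees d (insert d (G.branch e d)) | S.card = n + 1}.encard =
      {S ∈ G.branchSubtrees e d | S.card = n}.encard := by
  rw [Set.insert_eq, encard_rootedSubtrees_union hacyc hde
    (Set.singleton_subset_iff.mpr mem_branch_self), rootedSubtrees_singleton,
    sum_eq_single (1, n)]
  · rw [Set.sep_eq_self_iff_mem_true.mpr (by simp), Set.encard_singleton, one_mul]
  · intro q hq hq1
    have : q.1 ≠ 1 := fun h => hq1 (Prod.ext h (by have := mem_antidiagonal.mp hq; omega))
    rw [Set.sep_eq_empty_iff_mem_false.mpr (by simpa [eq_comm] using this), Set.encard_empty,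
      zero_mul]
  · simp [add_comm]

theorem encard_branchSubtrees_sep_card (hacyc : G.IsAcyclic)
    (hdeg : ∀ w, (G.neighborSet w).ncard = 3) (n : ℕ) {c d : V} (hcd : G.Adj c d) :
    {S ∈ G.branchSubtrees d c | S.card = n}.encard = catalan n := by
  induction n using Nat.strong_induction_on generalizing c d with
  | _ n ih =>
  rcases n with _ | n
  · rw [branchSubtrees_sep_card_zero, Set.encard_singleton, catalan_zero, Nat.cast_one]
  obtain ⟨e₁, e₂, hne, he⟩ := exists_neighborSet_sdiff_eq_pair (hdeg d) hcd.symm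
  have he₁ : G.Adj d e₁ := (he ▸ Set.mem_insert e₁ {e₂} : e₁ ∈ G.neighborSet d \ {c}).1
  have he₂ : G.Adj d e₂ := (he ▸ Set.mem_insert_of_mem e₁ rfl : e₂ ∈ G.neighborSet d \ {c}).1
  rw [branchSubtrees_sep_card_succ, branch_eq_insert_union hacyc he,
    encard_rootedSubtrees_union hacyc he₂
      (Set.insert_subset mem_branch_self (branch_subset_branch hacyc he₁ hne)),
    Nat.sum_antidiagonal_succ, rootedSubtrees_sep_card_zero, Set.encard_empty, zero_mul,
    zero_add, catalan_succ', Nat.cast_sum]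
  refine sum_congr rfl fun q hq => ?_
  have hq' := mem_antidiagonal.mp hq
  rw [encard_rootedSubtrees_insert_branch hacyc he₁, ih q.1 (by omega) he₁,
    ih q.2 (by omega) he₂, Nat.cast_mul]

theorem encard_rootedSubtrees_branch_union_branch (hacyc : G.IsAcyclic)
    (hdeg : ∀ w, (G.neighborSet w).ncard = 3) (hvu : G.Adj v u) (k : ℕ) :
    {S ∈ G.rootedSubtrees v (G.branch v u ∪ G.branch u v) | S.card = k}.encard =
      (catalan (k + 1) - catalan k : ℕ) := by
  rw [encard_rootedSubtrees_union hacyc hvu subset_rfl]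
  rcases k with _ | k
  · rw [Nat.antidiagonal_zero, sum_singleton, rootedSubtrees_sep_card_zero]
    simp
  rw [Nat.sum_antidiagonal_succ, rootedSubtrees_sep_card_zero, Set.encard_empty, zero_mul,
    zero_add, ← sum_antidiagonal_catalan_succ_mul, Nat.cast_sum]
  refine sum_congr rfl fun q _ => ?_
  rw [← branchSubtrees_sep_card_succ, encard_branchSubtrees_sep_card hacyc hdeg _ hvu.symm,
    encard_branchSubtrees_sep_card hacyc hdeg _ hvu, Nat.cast_mul]

end SimpleGraph

open SimpleGraph in
theorem card_subtrees_through_vertex_general {V : Type*} (G : SimpleGraph V)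
    (hconn : G.Connected) (hacyc : G.IsAcyclic)
    (hdeg : ∀ v : V, (G.neighborSet v).ncard = 3)
    (k : ℕ) (v : V) :
    {S : Finset V | v ∈ S ∧ S.card = k ∧ (G.induce (S : Set V)).Connected}.Finite ∧
    {S : Finset V | v ∈ S ∧ S.card = k ∧ (G.induce (S : Set V)).Connected}.ncard
      = catalan (k + 1) - catalan k := by
  obtain ⟨u, hvu⟩ : (G.neighborSet v).Nonempty :=
    Set.nonempty_of_ncard_ne_zero (by rw [hdeg v]; decide)
  have hset : {S : Finset V | v ∈ S ∧ S.card = k ∧ (G.induce (S : Set V)).Connected} =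
      {S ∈ G.rootedSubtrees v (G.branch v u ∪ G.branch u v) | S.card = k} := by
    rw [branch_union_branch hconn.preconnected]
    exact Set.ext fun S => ⟨fun ⟨hv, hk, hS⟩ => ⟨⟨hv, Set.subset_univ _, hS⟩, hk⟩,
      fun ⟨⟨hv, _, hS⟩, hk⟩ => ⟨hv, hk, hS⟩⟩
  have hcount := encard_rootedSubtrees_branch_union_branch hacyc hdeg hvu k
  rw [hset]
  exact ⟨Set.finite_of_encard_eq_coe hcount, by rw [Set.ncard_def, hcount, ENat.toNat_natCast]⟩

/-- In a connected acyclic graph in which every vertex has exactly 3 neighbours,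
for every `k ≥ 1` and every vertex `v`, the collection of `k`-element vertex sets
containing `v` whose induced subgraph is connected is finite, and has cardinality
`catalan (k+1) - catalan k`. -/
theorem card_subtrees_through_vertex {V : Type*} (G : SimpleGraph V)
    (hconn : G.Connected) (hacyc : G.IsAcyclic)
    (hdeg : ∀ v : V, (G.neighborSet v).ncard = 3)
    (k : ℕ) (hk : 1 ≤ k) (v : V) :
    {S : Finset V | v ∈ S ∧ S.card = k ∧ (G.induce (S : Set V)).Connected}.Finite ∧
    {S : Finset V | v ∈ S ∧ S.card = k ∧ (G.induce (S : Set V)).Connected}.ncard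
      = catalan (k + 1) - catalan k :=
  card_subtrees_through_vertex_general G hconn hacyc hdeg k v
end

section
/- For every integer k ≥ 1, 3·binom(2k+1, k−1) = (2k+1)·(catalan(k+1) − catalan(k)). -/
private lemma aux_choose (j : ℕ) :
    (j + 2) * ((j + 3) * Nat.choose (2 * j + 3) j) =
      (2 * j + 3) * (Nat.choose (2 * j + 2) (j + 1) * (j + 1)) := by
  have h1 : Nat.choose (2 * j + 3) (j + 1) * (j + 1) = Nat.choose (2 * j + 3) j * (j + 3) := by
    have := Nat.choose_succ_right_eq (2 * j + 3) j
    rwa [show 2 * j + 3 - j = j + 3 from by omega] at this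
  have h2 : (2 * j + 3) * Nat.choose (2 * j + 2) j = Nat.choose (2 * j + 3) (j + 1) * (j + 1) := by
    exact Nat.add_one_mul_choose_eq (2 * j + 2) j
  have h3 : Nat.choose (2 * j + 2) (j + 1) * (j + 1) = Nat.choose (2 * j + 2) j * (j + 2) := by
    have := Nat.choose_succ_right_eq (2 * j + 2) j
    rwa [show 2 * j + 2 - j = j + 2 from by omega] at this
  nlinarith [h1, h2, h3]

/-- For every `k ≥ 1`, `3 * C(2k+1, k-1) = (2k+1) * (catalan (k+1) - catalan k)`. -/
theorem three_mul_choose_eq (k : ℕ) (hk : 1 ≤ k) :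
    3 * Nat.choose (2 * k + 1) (k - 1) = (2 * k + 1) * (catalan (k + 1) - catalan k) := by
  obtain ⟨j, rfl⟩ : ∃ j, k = j + 1 := ⟨k - 1, by omega⟩
  have hc1 : (j + 2) * catalan (j + 1) = Nat.centralBinom (j + 1) :=
    succ_mul_catalan_eq_centralBinom (j + 1)
  have hc2 : (j + 3) * catalan (j + 2) = Nat.centralBinom (j + 2) :=
    succ_mul_catalan_eq_centralBinom (j + 2)
  have hcb : (j + 2) * Nat.centralBinom (j + 2) = 2 * (2 * (j + 1) + 1) * Nat.centralBinom (j + 1) :=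
    Nat.succ_mul_centralBinom_succ (j + 1)
  have hch := aux_choose j
  have hcb1 : Nat.centralBinom (j + 1) = Nat.choose (2 * j + 2) (j + 1) := by
    rw [Nat.centralBinom]; ring_nf
  rw [hcb1] at hc1 hcb
  have H : 3 * Nat.choose (2 * (j + 1) + 1) (j + 1 - 1) + (2 * (j + 1) + 1) * catalan (j + 1)
      = (2 * (j + 1) + 1) * catalan (j + 2) := by
    have hpos : 0 < (j + 2) * (j + 3) := by positivity
    apply Nat.eq_of_mul_eq_mul_left hpos
    have e1 : 2 * (j + 1) + 1 = 2 * j + 3 := by ring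
    have e2 : j + 1 - 1 = j := by omega
    rw [e1, e2]
    nlinarith [hc1, hc2, hcb, hch]
  have e3 : catalan (j + 1 + 1) = catalan (j + 2) := by norm_num
  rw [e3, Nat.mul_sub]
  omega
end

section
/- For every integer n ≥ 2, the maximum, over all trees T on n vertices with maximum degree at most 3, of the number of 3-vertex subtrees of T equals ⌊(3n−6)/2⌋; moreover, every tree on n vertices with maximum degree at most 3 having exactly ⌊(n−2)/2⌋ vertices of degree 3 attains this maximum. -/
/-- The number of `k`-vertex subtrees of a graph on `Fin n`, i.e. the number of
`k`-element vertex sets whose induced subgraph is connected. -/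
noncomputable def subtreeCount {n : ℕ} (G : SimpleGraph (Fin n)) (k : ℕ) : ℕ :=
  {S : Finset (Fin n) | S.card = k ∧ (G.induce (S : Set (Fin n))).Connected}.ncard

/-- `G` is a tree (connected and acyclic) with maximum degree at most 3. -/
def IsTreeMaxDeg3 {n : ℕ} (G : SimpleGraph (Fin n)) : Prop :=
  G.Connected ∧ G.IsAcyclic ∧ ∀ v, (G.neighborSet v).ncard ≤ 3

/-- The maximum number of `k`-vertex subtrees over all trees on `n`
vertices with maximum degree at most 3. -/
noncomputable def maxSubtrees (n k : ℕ) : ℕ :=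
  sSup {m | ∃ G : SimpleGraph (Fin n), IsTreeMaxDeg3 G ∧ subtreeCount G k = m}

/-!
In a tree a connected triple is a vertex together with two of its neighbours, and its centre is
unique because trees have no triangles; so a tree with degrees `d v` has `∑ v, (d v).choose 2`
three-vertex subtrees. When all degrees lie in `{1, 2, 3}` this is
`∑ v, (d v - 1) + n₃ = n - 2 + n₃`, where `n₃` counts the vertices of degree 3, and
`2 * n₃ ≤ ∑ v, (d v - 1) = n - 2`. The binary heap on `n` vertices has exactly `(n - 2) / 2`
vertices of degree 3, namely the `k` with `1 ≤ k` and `2k + 1 < n`.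
-/

open SimpleGraph Finset

namespace SimpleGraph

variable {V : Type*} {G : SimpleGraph V}

/-- The maximal vertex of a cycle would need two distinct smaller neighbours on the cycle. -/
theorem isAcyclic_of_unique_lt_adj [LinearOrder V]
    (h : ∀ ⦃v a b⦄, G.Adj v a → G.Adj v b → a < v → b < v → a = b) : G.IsAcyclic := by
  intro u c hc
  obtain ⟨M, hM, hmax⟩ := c.support.toFinset.exists_max_image id ⟨u, by simp⟩
  rw [List.mem_toFinset] at hM
  obtain ⟨a, b, hab, hnbr⟩ := Set.ncard_eq_two.mp (hc.ncard_neighborSet_toSubgraph_eq_two hM)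
  have hlt : ∀ x ∈ c.toSubgraph.neighborSet M, G.Adj M x ∧ x < M := fun x hx =>
    ⟨hx.adj_sub, lt_of_le_of_ne
      (hmax x (List.mem_toFinset.mpr ((c.mem_verts_toSubgraph).mp hx.snd_mem)))
      hx.adj_sub.ne'⟩
  obtain ⟨hMa, haM⟩ := hlt a (by simp [hnbr])
  obtain ⟨hMb, hbM⟩ := hlt b (by simp [hnbr])
  exact hab (h hMa hMb haM hbM)

theorem exists_adj_of_connected_induce {S : Set V} (h : (G.induce S).Connected) {x y : V}
    (hx : x ∈ S) (hy : y ∈ S) (hxy : x ≠ y) : ∃ w ∈ S, G.Adj x w := by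
  obtain ⟨p⟩ := h.preconnected ⟨x, hx⟩ ⟨y, hy⟩
  cases p with
  | nil => exact absurd rfl hxy
  | cons hadj _ => exact ⟨_, Subtype.prop _, hadj⟩

section Triples

variable [DecidableEq V]

theorem connected_induce_of_adj_of_adj {v a b : V} (ha : G.Adj v a) (hb : G.Adj v b) :
    (G.induce (({v, a, b} : Finset V) : Set V)).Connected := by
  have hv : v ∈ (({v, a, b} : Finset V) : Set V) := by simp
  have : Nonempty (({v, a, b} : Finset V) : Set V) := ⟨⟨v, hv⟩⟩
  have hreach : ∀ u, (G.induce (({v, a, b} : Finset V) : Set V)).Reachable u ⟨v, hv⟩ := by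
    rintro ⟨u, hu⟩
    simp only [coe_insert, coe_singleton, Set.mem_insert_iff, Set.mem_singleton_iff] at hu
    rcases hu with rfl | rfl | rfl
    · rfl
    · exact Adj.reachable ha.symm
    · exact Adj.reachable hb.symm
  exact ⟨fun u w => (hreach u).trans (hreach w).symm⟩

theorem connected_induce_iff_of_card_eq_three {S : Finset V} (hS : S.card = 3) :
    (G.induce (S : Set V)).Connected ↔
      ∃ v a b, G.Adj v a ∧ G.Adj v b ∧ a ≠ b ∧ S = {v, a, b} := by
  refine ⟨fun h => ?_, ?_⟩
  · obtain ⟨x, y, z, hxy, hxz, hyz, rfl⟩ := card_eq_three.mp hS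
    have hnbr : ∀ u u' u'', u ∈ ({x, y, z} : Finset V) → u' ∈ ({x, y, z} : Finset V) → u ≠ u' →
        (∀ w ∈ ({x, y, z} : Finset V), w = u ∨ w = u' ∨ w = u'') →
        G.Adj u u' ∨ G.Adj u u'' := fun u u' u'' hu hu' hne hmem => by
      obtain ⟨w, hw, hadj⟩ := exists_adj_of_connected_induce h hu hu' hne
      rcases hmem w hw with rfl | rfl | rfl
      exacts [(G.irrefl hadj).elim, .inl hadj, .inr hadj]
    have hx := hnbr x y z (by simp) (by simp) hxy (by simp)
    have hy := hnbr y x z (by simp) (by simp) hxy.symm (by simp)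
    have hz := hnbr z x y (by simp) (by simp) hxz.symm (by simp)
    rcases hx with hxy' | hxz'
    · rcases hz with hzx | hzy
      · exact ⟨x, y, z, hxy', hzx.symm, hyz, rfl⟩
      · exact ⟨y, x, z, hxy'.symm, hzy.symm, hxz, insert_comm _ _ _⟩
    · rcases hy with hyx | hyz'
      · exact ⟨x, y, z, hyx.symm, hxz', hyz, rfl⟩
      · exact ⟨z, x, y, hxz'.symm, hyz'.symm, hxy, by ext; simp; tauto⟩
  · rintro ⟨v, a, b, ha, hb, -, rfl⟩
    exact connected_induce_of_adj_of_adj ha hb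

section Count

variable [Fintype V] [DecidableRel G.Adj]

theorem CliqueFree.eq_of_insert_eq_insert (hG : G.CliqueFree 3) {v v' : V} {P P' : Finset V}
    (hP : P ⊆ G.neighborFinset v) (hP' : P' ⊆ G.neighborFinset v') (hcard : P.card = 2)
    (h : insert v P = insert v' P') : v = v' ∧ P = P' := by
  have hvP : v ∉ P := fun hv => G.irrefl ((G.mem_neighborFinset _ _).mp (hP hv))
  have hvP' : v' ∉ P' := fun hv => G.irrefl ((G.mem_neighborFinset _ _).mp (hP' hv))
  suffices hvv' : v = v' by
    subst hvv'
    exact ⟨rfl, by rw [← erase_insert hvP, h, erase_insert hvP']⟩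
  by_contra hne
  have hv'P : v' ∈ P := (mem_insert.mp (h ▸ mem_insert_self v' P')).resolve_left (Ne.symm hne)
  obtain ⟨t, htP, htv'⟩ := exists_mem_ne (by omega : 1 < P.card) v'
  have hvt : G.Adj v t := (G.mem_neighborFinset _ _).mp (hP htP)
  have htP' : t ∈ P' := (mem_insert.mp (h ▸ mem_insert_of_mem htP)).resolve_left htv'
  exact hG _ (is3Clique_triple_iff.mpr ⟨(G.mem_neighborFinset _ _).mp (hP hv'P), hvt,
    (G.mem_neighborFinset _ _).mp (hP' htP')⟩)

theorem ncard_connected_induce_card_eq_three (hG : G.CliqueFree 3) :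
    {S : Finset V | S.card = 3 ∧ (G.induce (S : Set V)).Connected}.ncard =
      ∑ v, (G.degree v).choose 2 := by
  have hset : {S : Finset V | S.card = 3 ∧ (G.induce (S : Set V)).Connected} =
      ↑((univ.sigma fun v => (G.neighborFinset v).powersetCard 2).image
        fun p => insert p.1 p.2) := by
    ext S
    simp only [Set.mem_ofPred_eq, coe_image, Set.mem_image, mem_coe, mem_sigma, mem_univ,
      true_and, mem_powersetCard, Sigma.exists]
    constructor
    · rintro ⟨hS, hconn⟩
      obtain ⟨v, a, b, ha, hb, hab, rfl⟩ := (connected_induce_iff_of_card_eq_three hS).mp hconn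
      refine ⟨v, {a, b}, ⟨?_, card_pair hab⟩, rfl⟩
      simp [insert_subset_iff, ha, hb]
    · rintro ⟨v, P, ⟨hP, hcard⟩, rfl⟩
      obtain ⟨a, b, hab, rfl⟩ := card_eq_two.mp hcard
      have ha : G.Adj v a := (G.mem_neighborFinset _ _).mp (hP (by simp))
      have hb : G.Adj v b := (G.mem_neighborFinset _ _).mp (hP (by simp))
      refine ⟨?_, connected_induce_of_adj_of_adj ha hb⟩
      rw [card_insert_of_notMem (by simp [ha.ne, hb.ne]), card_pair hab]
  rw [hset, Set.ncard_coe_finset, card_image_of_injOn, card_sigma]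
  · simp only [card_powersetCard, card_neighborFinset_eq_degree]
  · rintro ⟨v, P⟩ hp ⟨v', P'⟩ hp' h
    simp only [coe_sigma, Set.mem_sigma_iff, mem_coe, mem_univ, true_and,
      mem_powersetCard] at hp hp'
    obtain ⟨rfl, rfl⟩ := hG.eq_of_insert_eq_insert hp.1 hp'.1 hp.2 h
    rfl

end Count

end Triples

section Degrees

variable [Fintype V] [DecidableRel G.Adj]

theorem ncard_neighborSet_eq_degree (v : V) : (G.neighborSet v).ncard = G.degree v := by
  rw [Set.ncard_eq_toFinset_card']
  rfl

theorem ncard_setOf_ncard_neighborSet_eq (k : ℕ) :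
    {v | (G.neighborSet v).ncard = k}.ncard = #{v | G.degree v = k} := by
  rw [← Set.ncard_coe_finset, coe_filter_univ]
  simp only [ncard_neighborSet_eq_degree]

theorem IsTree.sum_degree_sub_one [Nontrivial V] (hG : G.IsTree) :
    ∑ v, (G.degree v - 1) = Fintype.card V - 2 := by
  have hpos : ∀ v, 0 < G.degree v := fun v => hG.connected.preconnected.degree_pos_of_nontrivial v
  have hsum : ∑ v, (G.degree v - 1) + Fintype.card V = ∑ v, G.degree v := by
    rw [← card_univ, card_eq_sum_ones, ← sum_add_distrib]
    exact sum_congr rfl fun v _ => Nat.sub_add_cancel (hpos v)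
  have := hG.card_edgeFinset
  have := G.sum_degrees_eq_twice_card_edges
  have := Fintype.one_lt_card (α := V)
  omega

theorem IsTree.two_mul_card_degree_eq_three_le [Nontrivial V] (hG : G.IsTree) :
    2 * #{v | G.degree v = 3} ≤ Fintype.card V - 2 :=
  calc 2 * #{v | G.degree v = 3} = ∑ v with G.degree v = 3, (G.degree v - 1) := by
        rw [sum_congr rfl fun v hv => by rw [(mem_filter.mp hv).2], sum_const, smul_eq_mul,
          mul_comm]
    _ ≤ ∑ v, (G.degree v - 1) := sum_le_sum_of_subset (filter_subset _ _)
    _ = Fintype.card V - 2 := hG.sum_degree_sub_one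

/-- For degrees in `{1, 2, 3}`, `d.choose 2 = (d - 1) + [d = 3]`. -/
theorem IsTree.sum_choose_two_degree [Nontrivial V] (hG : G.IsTree) (hmax : ∀ v, G.degree v ≤ 3) :
    ∑ v, (G.degree v).choose 2 = (Fintype.card V - 2) + #{v | G.degree v = 3} := by
  have hpos : ∀ v, 0 < G.degree v := fun v => hG.connected.preconnected.degree_pos_of_nontrivial v
  rw [← hG.sum_degree_sub_one, card_filter, ← sum_add_distrib]
  refine sum_congr rfl fun v _ => ?_
  have := hmax v
  have := hpos v
  interval_cases G.degree v <;> rfl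

end Degrees

end SimpleGraph

/-- The binary heap: vertex `k ≠ 0` is joined to its parent `k / 2` (`fromRel` drops the loop at
`0 = 0 / 2`). -/
def heapGraph (n : ℕ) : SimpleGraph (Fin n) :=
  SimpleGraph.fromRel fun a b => (a : ℕ) = b / 2

variable {n : ℕ}

theorem heapGraph_adj {a b : Fin n} :
    (heapGraph n).Adj a b ↔ a ≠ b ∧ ((a : ℕ) = b / 2 ∨ (b : ℕ) = a / 2) :=
  fromRel_adj _ a b

theorem heapGraph_isAcyclic : (heapGraph n).IsAcyclic :=
  isAcyclic_of_unique_lt_adj fun v a b ha hb hav hbv => by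
    rw [heapGraph_adj, Fin.ne_iff_vne] at ha hb
    rw [Fin.lt_def] at hav hbv
    ext
    omega

theorem heapGraph_reachable_zero (hn : 0 < n) (v : Fin n) :
    (heapGraph n).Reachable v ⟨0, hn⟩ := by
  induction v using WellFoundedLT.induction with
  | _ v ih =>
    by_cases hv : (v : ℕ) = 0
    · rw [show v = ⟨0, hn⟩ from Fin.ext hv]
    · have hadj : (heapGraph n).Adj v ⟨(v : ℕ) / 2, by omega⟩ := by
        rw [heapGraph_adj, Fin.ne_iff_vne]
        exact ⟨by dsimp only; omega, .inr rfl⟩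
      exact hadj.reachable.trans (ih _ (Fin.lt_def.mpr (by dsimp only; omega)))

theorem heapGraph_connected (hn : 0 < n) : (heapGraph n).Connected :=
  have : Nonempty (Fin n) := ⟨⟨0, hn⟩⟩
  ⟨fun u v => (heapGraph_reachable_zero hn u).trans (heapGraph_reachable_zero hn v).symm⟩

theorem image_val_neighborSet_heapGraph (v : Fin n) :
    Fin.val '' (heapGraph n).neighborSet v =
      {w | w < n ∧ w ≠ v ∧ ((v : ℕ) = w / 2 ∨ w = (v : ℕ) / 2)} := by
  ext w
  constructor
  · rintro ⟨u, hu, rfl⟩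
    rw [mem_neighborSet, heapGraph_adj, Fin.ne_iff_vne] at hu
    exact ⟨u.2, Ne.symm hu.1, hu.2⟩
  · rintro ⟨hw, hne, hvw⟩
    refine ⟨⟨w, hw⟩, ?_, rfl⟩
    rw [mem_neighborSet, heapGraph_adj, Fin.ne_iff_vne]
    exact ⟨Ne.symm hne, hvw⟩

theorem ncard_neighborSet_heapGraph (v : Fin n) :
    ((heapGraph n).neighborSet v).ncard =
      {w | w < n ∧ w ≠ v ∧ ((v : ℕ) = w / 2 ∨ w = (v : ℕ) / 2)}.ncard := by
  rw [← image_val_neighborSet_heapGraph, Set.ncard_image_of_injective _ Fin.val_injective]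

theorem ncard_neighborSet_heapGraph_le_three (v : Fin n) :
    ((heapGraph n).neighborSet v).ncard ≤ 3 := by
  rw [ncard_neighborSet_heapGraph]
  calc _ ≤ ({(v : ℕ) / 2, 2 * (v : ℕ), 2 * (v : ℕ) + 1} : Finset ℕ).card := by
        rw [← Set.ncard_coe_finset]
        exact Set.ncard_le_ncard (fun w hw => by simp only [Set.mem_ofPred_eq] at hw; simp; omega)
          (Finset.finite_toSet _)
    _ ≤ 3 := card_le_three

theorem ncard_neighborSet_heapGraph_eq_three {v : Fin n} (h₀ : (v : ℕ) ≠ 0)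
    (hv : 2 * (v : ℕ) + 1 < n) : ((heapGraph n).neighborSet v).ncard = 3 := by
  rw [ncard_neighborSet_heapGraph, Set.ncard_eq_three]
  refine ⟨v / 2, 2 * (v : ℕ), 2 * (v : ℕ) + 1, by omega, by omega, by omega, ?_⟩
  ext w
  simp only [Set.mem_ofPred_eq, Set.mem_insert_iff, Set.mem_singleton_iff]
  omega

theorem le_ncard_neighborSet_heapGraph_eq_three :
    (n - 2) / 2 ≤ {v : Fin n | ((heapGraph n).neighborSet v).ncard = 3}.ncard := by
  rw [← Set.ncard_image_of_injective _ Fin.val_injective]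
  have hsub : Set.Icc 1 ((n - 2) / 2) ⊆
      Fin.val '' {v : Fin n | ((heapGraph n).neighborSet v).ncard = 3} := by
    intro k hk
    rw [Set.mem_Icc] at hk
    exact ⟨⟨k, by omega⟩, ncard_neighborSet_heapGraph_eq_three (by dsimp only; omega)
      (by dsimp only; omega), rfl⟩
  calc (n - 2) / 2 = (Set.Icc 1 ((n - 2) / 2)).ncard := by simp
    _ ≤ _ := Set.ncard_le_ncard hsub (Set.toFinite _)

variable {G : SimpleGraph (Fin n)}

theorem subtreeCount_three_eq (hn : 2 ≤ n) (hG : IsTreeMaxDeg3 G) :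
    subtreeCount G 3 = (n - 2) + {v | (G.neighborSet v).ncard = 3}.ncard := by
  classical
  have : Nontrivial (Fin n) := Fin.nontrivial_iff_two_le.mpr hn
  rw [subtreeCount, ncard_connected_induce_card_eq_three (hG.2.1.cliqueFree le_rfl),
    IsTree.sum_choose_two_degree ⟨hG.1, hG.2.1⟩
      fun v => ncard_neighborSet_eq_degree (G := G) v ▸ hG.2.2 v,
    Fintype.card_fin, ncard_setOf_ncard_neighborSet_eq]

theorem two_mul_ncard_neighborSet_eq_three_le (hn : 2 ≤ n) (hG : IsTreeMaxDeg3 G) :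
    2 * {v | (G.neighborSet v).ncard = 3}.ncard ≤ n - 2 := by
  classical
  have : Nontrivial (Fin n) := Fin.nontrivial_iff_two_le.mpr hn
  simpa [ncard_setOf_ncard_neighborSet_eq] using
    IsTree.two_mul_card_degree_eq_three_le ⟨hG.1, hG.2.1⟩

theorem isTreeMaxDeg3_heapGraph (hn : 0 < n) : IsTreeMaxDeg3 (heapGraph n) :=
  ⟨heapGraph_connected hn, heapGraph_isAcyclic, ncard_neighborSet_heapGraph_le_three⟩

/-- For `n ≥ 2`, the maximum number of 3-vertex subtrees of a tree on `n` vertices with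
maximum degree at most 3 is `⌊(3n-6)/2⌋`, and every such tree having exactly
`⌊(n-2)/2⌋` vertices of degree 3 attains the maximum. -/
theorem maxSubtrees_three (n : ℕ) (hn : 2 ≤ n) :
    maxSubtrees n 3 = (3 * n - 6) / 2 ∧
    ∀ G : SimpleGraph (Fin n), IsTreeMaxDeg3 G →
      {v : Fin n | (G.neighborSet v).ncard = 3}.ncard = (n - 2) / 2 →
      subtreeCount G 3 = (3 * n - 6) / 2 := by
  have hextremal : ∀ G : SimpleGraph (Fin n), IsTreeMaxDeg3 G →
      {v : Fin n | (G.neighborSet v).ncard = 3}.ncard = (n - 2) / 2 →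
      subtreeCount G 3 = (3 * n - 6) / 2 := fun G hG h3 => by
    rw [subtreeCount_three_eq hn hG, h3]
    omega
  have hheap : IsTreeMaxDeg3 (heapGraph n) := isTreeMaxDeg3_heapGraph (by omega)
  have hheap3 : {v : Fin n | ((heapGraph n).neighborSet v).ncard = 3}.ncard = (n - 2) / 2 := by
    have := two_mul_ncard_neighborSet_eq_three_le hn hheap
    have := le_ncard_neighborSet_heapGraph_eq_three (n := n)
    omega
  refine ⟨IsGreatest.csSup_eq ⟨⟨heapGraph n, hheap, hextremal _ hheap hheap3⟩, ?_⟩, hextremal⟩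
  rintro _ ⟨G, hG, rfl⟩
  have := two_mul_ncard_neighborSet_eq_three_le hn hG
  rw [subtreeCount_three_eq hn hG]
  omega
end

section
/- Let f : ℕ → ℝ satisfy f(0) = 1, f(k) ≥ 0 for all k, and f(k) ≤ Σ_{r=1}^{k} 2·catalan(r−1)·f(k−r) for every k ≥ 1. Then f(k) ≤ 4^k for every natural number k. -/
/-!
Since the coefficients `2 * catalan (r - 1)` are nonnegative, strong induction reduces the claim
to `∑_{r=1}^k 2 C_{r-1} 4^(k-r) ≤ 4^k`. This holds with the exact defect `centralBinom k`,
which follows by induction from `2 C_k + binom(2k+2, k+1) = 4 binom(2k, k)`.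
-/

open Finset

lemma two_mul_catalan_add_centralBinom_succ (m : ℕ) :
    2 * catalan m + (m + 1).centralBinom = 4 * m.centralBinom := by
  refine Nat.eq_of_mul_eq_mul_left (by omega : 0 < m + 1) ?_
  have hcat := succ_mul_catalan_eq_centralBinom m
  have hbinom := Nat.succ_mul_centralBinom_succ m
  rw [mul_add, hbinom, ← hcat]
  ring

lemma sum_two_mul_catalan_mul_four_pow_add_centralBinom (k : ℕ) :
    ∑ r ∈ Icc 1 k, 2 * catalan (r - 1) * 4 ^ (k - r) + k.centralBinom = 4 ^ k := by
  induction k with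
  | zero => simp
  | succ k ih =>
    have hshift : ∑ r ∈ Icc 1 k, 2 * catalan (r - 1) * 4 ^ (k + 1 - r) =
        4 * ∑ r ∈ Icc 1 k, 2 * catalan (r - 1) * 4 ^ (k - r) := by
      rw [mul_sum]
      refine sum_congr rfl fun r hr => ?_
      rw [Nat.sub_add_comm (mem_Icc.mp hr).2, pow_succ]
      ring
    rw [sum_Icc_succ_top (by omega), hshift, Nat.add_sub_cancel, Nat.sub_self, pow_zero, mul_one,
      add_assoc, two_mul_catalan_add_centralBinom_succ, pow_succ, ← ih]
    ring

lemma sum_two_mul_catalan_mul_four_pow_le (k : ℕ) :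
    ∑ r ∈ Icc 1 k, 2 * (catalan (r - 1) : ℝ) * 4 ^ (k - r) ≤ 4 ^ k := by
  have h := sum_two_mul_catalan_mul_four_pow_add_centralBinom k
  exact_mod_cast h ▸ Nat.le_add_right _ _

theorem le_four_pow_of_catalan_rec_general (f : ℕ → ℝ) (h0 : f 0 = 1)
    (hrec : ∀ k, 1 ≤ k →
      f k ≤ ∑ r ∈ Finset.Icc 1 k, 2 * (catalan (r - 1) : ℝ) * f (k - r)) :
    ∀ k, f k ≤ 4 ^ k := by
  intro k
  induction k using Nat.strong_induction_on with
  | _ k ih =>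
    rcases Nat.eq_zero_or_pos k with rfl | hk
    · simp [h0]
    calc f k ≤ ∑ r ∈ Icc 1 k, 2 * (catalan (r - 1) : ℝ) * f (k - r) := hrec k hk
      _ ≤ ∑ r ∈ Icc 1 k, 2 * (catalan (r - 1) : ℝ) * 4 ^ (k - r) := by
        gcongr with r hr
        exact ih _ (Nat.sub_lt hk (mem_Icc.mp hr).1)
      _ ≤ 4 ^ k := sum_two_mul_catalan_mul_four_pow_le k

/-- If `f : ℕ → ℝ` is nonnegative, `f 0 = 1`, and
`f k ≤ ∑_{r=1}^k 2 * catalan (r-1) * f (k-r)` for all `k ≥ 1`, then `f k ≤ 4^k`. -/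
theorem le_four_pow_of_catalan_rec (f : ℕ → ℝ) (h0 : f 0 = 1) (hnonneg : ∀ k, 0 ≤ f k)
    (hrec : ∀ k, 1 ≤ k →
      f k ≤ ∑ r ∈ Finset.Icc 1 k, 2 * (catalan (r - 1) : ℝ) * f (k - r)) :
    ∀ k, f k ≤ 4 ^ k :=
  le_four_pow_of_catalan_rec_general f h0 hrec
end

section
/- The series Σ_{n=0}^{∞} catalan(n)/4^n converges in the real numbers and its sum equals 2 (i.e., the Catalan generating function F(z) = Σ catalan(n) z^n satisfies F(1/4) = 2). -/
open Finset Filter Topology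

private lemma cb_succ_real (N : ℕ) :
    (Nat.centralBinom (N+1) : ℝ) = 2 * (2*N+1) * Nat.centralBinom N / (N+1) := by
  have h2 : ((N:ℝ) + 1) * Nat.centralBinom (N+1) = 2 * (2*(N:ℝ)+1) * Nat.centralBinom N := by
    exact_mod_cast Nat.succ_mul_centralBinom_succ N
  have hN : (N:ℝ) + 1 ≠ 0 := by positivity
  field_simp
  linarith [h2]

private lemma catalan_real (N : ℕ) :
    (catalan N : ℝ) = Nat.centralBinom N / (N+1) := by
  have h1 : ((N:ℝ) + 1) * catalan N = Nat.centralBinom N := by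
    exact_mod_cast succ_mul_catalan_eq_centralBinom N
  have hN : (N:ℝ) + 1 ≠ 0 := by positivity
  field_simp
  linarith [h1]

private lemma partial_sum_eq (N : ℕ) :
    ∑ n ∈ Finset.range N, (catalan n : ℝ) / 4 ^ n
      = 2 - 2 * Nat.centralBinom N / 4 ^ N := by
  induction N with
  | zero => simp [Nat.centralBinom]
  | succ N ih =>
    rw [Finset.sum_range_succ, ih, catalan_real, cb_succ_real]
    have h4 : (4:ℝ)^N ≠ 0 := by positivity
    have hN : (N:ℝ) + 1 ≠ 0 := by positivity
    field_simp
    ring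

private lemma cb_sq_le (N : ℕ) :
    (2*(N:ℝ)+1) * ((Nat.centralBinom N : ℝ) / 4^N)^2 ≤ 1 := by
  induction N with
  | zero => simp [Nat.centralBinom]
  | succ N ih =>
    have hN : (N:ℝ) + 1 ≠ 0 := by positivity
    have h4 : (4:ℝ)^N ≠ 0 := by positivity
    have ha : (0:ℝ) ≤ (Nat.centralBinom N : ℝ) / 4^N := by positivity
    have hrw : (Nat.centralBinom (N+1) : ℝ) / 4^(N+1)
        = ((Nat.centralBinom N : ℝ) / 4^N) * (2*N+1) / (2*(N+1)) := by
      rw [cb_succ_real]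
      field_simp
      ring
    push_cast
    rw [hrw]
    set a := (Nat.centralBinom N : ℝ) / 4^N with ha'
    have hn : (0:ℝ) ≤ (N:ℝ) := Nat.cast_nonneg N
    rw [div_pow, ← mul_div_assoc, div_le_one (by positivity)]
    have key : (2*(N:ℝ)+1) * a^2 * ((2*N+3)*(2*N+1)) ≤ 1 * ((2*N+3)*(2*N+1)) :=
      mul_le_mul_of_nonneg_right ih (by positivity)
    nlinarith [key, sq_nonneg a, hn]

private lemma cb_tendsto :
    Tendsto (fun N : ℕ => (Nat.centralBinom N : ℝ) / 4^N) atTop (𝓝 0) := by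
  have hbound : ∀ N : ℕ, (Nat.centralBinom N : ℝ) / 4^N ≤ 1 / Real.sqrt (2*N+1) := by
    intro N
    have ha : (0:ℝ) ≤ (Nat.centralBinom N : ℝ) / 4^N := by positivity
    have hpos : (0:ℝ) < 2*(N:ℝ)+1 := by positivity
    have hsq : ((Nat.centralBinom N : ℝ) / 4^N)^2 ≤ (2*(N:ℝ)+1)⁻¹ := by
      rw [inv_eq_one_div, le_div_iff₀ hpos]
      nlinarith [cb_sq_le N]
    calc (Nat.centralBinom N : ℝ) / 4^N
        = Real.sqrt (((Nat.centralBinom N : ℝ) / 4^N)^2) := by rw [Real.sqrt_sq ha]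
      _ ≤ Real.sqrt ((2*(N:ℝ)+1)⁻¹) := Real.sqrt_le_sqrt hsq
      _ = 1 / Real.sqrt (2*(N:ℝ)+1) := by rw [Real.sqrt_inv, one_div]
  have hsqrt : Tendsto Real.sqrt atTop atTop :=
    (tendsto_rpow_atTop (by norm_num : (0:ℝ) < 1/2)).congr
      fun x => (Real.sqrt_eq_rpow x).symm
  have htend : Tendsto (fun N : ℕ => 1 / Real.sqrt (2*N+1)) atTop (𝓝 0) := by
    simp only [one_div]
    apply Filter.Tendsto.inv_tendsto_atTop
    apply hsqrt.comp
    apply tendsto_atTop_add_const_right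
    exact (tendsto_natCast_atTop_atTop (R := ℝ)).const_mul_atTop (by norm_num)
  exact squeeze_zero (fun N => by positivity) hbound htend

/-- The Catalan generating function evaluated at `1/4`:
`∑_{n=0}^∞ catalan n / 4^n = 2`. -/
theorem hasSum_catalan_div_four_pow :
    HasSum (fun n : ℕ => (catalan n : ℝ) / 4 ^ n) 2 := by
  rw [hasSum_iff_tendsto_nat_of_nonneg (fun n => by positivity)]
  simp only [partial_sum_eq]
  have : Tendsto (fun N : ℕ => 2 - 2 * ((Nat.centralBinom N : ℝ) / 4^N)) atTop (𝓝 (2 - 2*0)) :=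
    (tendsto_const_nhds.sub (tendsto_const_nhds.mul cb_tendsto))
  simpa [mul_div_assoc] using this
end

section
/- Let t ≥ 2 and let m₀, m₁, …, m_{t−2} be positive integers. Suppose that for each 0 ≤ i ≤ t−3 we are given a finite sequence w_i whose entries all lie in {i, i+1}, containing exactly m_i entries equal to i and exactly m_{i+1} entries equal to i+1, and whose first entry is i. Then there exists exactly one permitted sequence γ of parameters (m₀+m₁+⋯+m_{t−2}, t) such that for every 0 ≤ i ≤ t−3, the subsequence of γ consisting of those entries equal to i or i+1 is exactly w_i. -/
/-!
Induction on `t`. Deleting the top letter `k + 1` (where `k = t - 2`) from a permitted sequence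
for `t + 1` leaves one for `t`. Since entries grow by at most one, every run of `k + 1`'s directly
follows a `k`, so the sequence is recovered from that deletion together with its subword on
`{k, k + 1}`: the `j`-th run of `k + 1`'s goes right after the `j`-th `k`. Conversely, inserting the
runs of `k + 1`'s of `w k` in this way into the unique sequence for `t` produces a permitted
sequence for `t + 1` with the required subwords.
-/

/-- A list `γ` of natural numbers is a *permitted sequence* of parameters
(`γ.length`, `t`) if its first entry is `0`, each entry exceeds the previous one by at
most `1`, and every entry is at most `t - 2`. -/
def PermittedSeq (t : ℕ) (γ : List ℕ) : Prop :=
  γ.head? = some 0 ∧ List.Chain' (fun a b => b ≤ a + 1) γ ∧ ∀ x ∈ γ, x ≤ t - 2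

open List

section filterTop

variable {k : ℕ}

theorem isChain_filter_ne_top :
    ∀ {γ : List ℕ}, IsChain (fun a b => b ≤ a + 1) γ → (∀ x ∈ γ, x ≤ k + 1) →
      IsChain (fun a b => b ≤ a + 1) (γ.filter (· ≠ k + 1))
  | [], _, _ => by simp
  | [x], _, _ => by by_cases hx : x = k + 1 <;> simp [hx]
  | x :: y :: γ, hc, hγ => by
    obtain ⟨hxy, hc'⟩ := isChain_cons_cons.mp hc
    by_cases hy : y = k + 1
    · -- `y = k + 1` forces `k ≤ x`, so anything `≤ k + 1` may follow `x` directly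
      have hxγ : IsChain (fun a b => b ≤ a + 1) (x :: γ) := by
        refine isChain_cons.mpr ⟨fun z hz => ?_, hc'.tail⟩
        have := hγ z (by simp [mem_of_mem_head? hz])
        omega
      have := isChain_filter_ne_top hxγ fun z hz =>
        hγ z (((sublist_cons_self y γ).cons_cons x).subset hz)
      simpa [filter_cons, hy] using this
    · have hyγ := isChain_filter_ne_top hc' (fun z hz => hγ z (mem_cons_of_mem _ hz))
      by_cases hx : x = k + 1
      · simpa [filter_cons, hx] using hyγ
      · rw [filter_cons_of_pos (by simpa using hx)]
        refine isChain_cons.mpr ⟨fun z hz => ?_, hyγ⟩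
        rw [filter_cons_of_pos (by simpa using hy)] at hz
        exact Option.some.inj hz ▸ hxy
termination_by γ => γ.length

theorem filter_pair_filter_ne_top {i : ℕ} (hi : i < k) (γ : List ℕ) :
    (γ.filter (· ≠ k + 1)).filter (fun x => x == i || x == i + 1) =
      γ.filter (fun x => x == i || x == i + 1) := by
  rw [filter_filter]
  refine filter_congr fun x _ => ?_
  by_cases h : x = i ∨ x = i + 1 <;> simp at h ⊢ <;> omega

theorem length_eq_length_filter_ne_add_count (γ : List ℕ) :
    γ.length = (γ.filter (· ≠ k + 1)).length +
      (γ.filter (fun x => x == k || x == k + 1)).count (k + 1) := by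
  rw [count_filter (by simp), count_eq_countP, ← countP_eq_length_filter, add_comm]
  convert length_eq_countP_add_countP (· == k + 1) (l := γ) using 3
  simp

theorem head?_filter_pair_ne_top {s : List ℕ} (hc : IsChain (fun a b => b ≤ a + 1) s)
    (hs : ∀ x ∈ s.head?, x ≤ k) :
    (s.filter (fun x => x == k || x == k + 1)).head? ≠ some (k + 1) := by
  induction s with
  | nil => simp
  | cons x s ih =>
    have hx : x ≤ k := hs x rfl
    rcases hx.eq_or_lt with rfl | hx
    · simp
    · have hs' : ∀ y ∈ s.head?, y ≤ k := fun y hy => by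
        have := (isChain_cons.mp hc).1 y hy
        omega
      simpa [filter_cons, hx.ne, show x ≠ k + 1 by omega] using ih hc.tail hs'

end filterTop

/-- `mergeTop k δ u` inserts the letters `k + 1` of a word `u` over `{k, k + 1}` into a word `δ`
over `{0, …, k}`: the `k`'s of `δ` and of `u` are matched in order, and each run of `k + 1`'s of
`u` is emitted right after the `k` it follows in `u`. -/
def mergeTop (k : ℕ) : List ℕ → List ℕ → List ℕ
  | [], u => u
  | a :: δ, [] => a :: δ
  | a :: δ, b :: u =>
    if b = k + 1 then b :: mergeTop k (a :: δ) u
    else if a = k then a :: mergeTop k δ u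
    else a :: mergeTop k δ (b :: u)
termination_by δ u => δ.length + u.length

section mergeTop

variable {k : ℕ} {δ u : List ℕ}

@[simp] theorem mergeTop_top_cons (δ u : List ℕ) :
    mergeTop k δ ((k + 1) :: u) = (k + 1) :: mergeTop k δ u := by
  cases δ with
  | nil => cases u <;> simp [mergeTop]
  | cons a δ => simp [mergeTop]

@[simp] theorem mergeTop_cons_cons_self (δ u : List ℕ) :
    mergeTop k (k :: δ) (k :: u) = k :: mergeTop k δ u := by
  simp [mergeTop]

theorem head?_mergeTop_cons (a : ℕ) (hu : u.head? ≠ some (k + 1)) :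
    (mergeTop k (a :: δ) u).head? = some a := by
  cases u with
  | nil => simp [mergeTop]
  | cons b u =>
    simp only [head?_cons, ne_eq, Option.some.injEq] at hu
    simp only [mergeTop, hu, if_false]
    split_ifs <;> rfl

theorem mergeTop_cons_of_ne {a : ℕ} (ha : a ≠ k) (hu : u.head? ≠ some (k + 1)) :
    mergeTop k (a :: δ) u = a :: mergeTop k δ u := by
  cases u with
  | nil => cases δ <;> simp [mergeTop]
  | cons b u => simp_all [mergeTop]

theorem filter_ne_top_mergeTop (hδ : ∀ x ∈ δ, x ≤ k) (hu : ∀ x ∈ u, x = k ∨ x = k + 1)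
    (hcount : u.count k = δ.count k) : (mergeTop k δ u).filter (· ≠ k + 1) = δ := by
  fun_induction mergeTop k δ u with
  | case1 u =>
    refine filter_eq_nil_iff.mpr fun x hx => ?_
    rcases hu x hx with rfl | rfl
    · simp [count_eq_zero.mp hcount] at hx
    · simp
  | case2 a δ => exact filter_eq_self.mpr fun x hx => by have := hδ x hx; simp; omega
  | case3 a δ u ih =>
    rw [forall_mem_cons] at hu
    simpa using ih hδ hu.2 (by simpa using hcount)
  | case4 δ b u hb ih =>
    rw [forall_mem_cons] at hδ hu
    obtain rfl : b = k := hu.1.resolve_right hb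
    simpa using ih hδ.2 hu.2 (by simpa using hcount)
  | case5 a δ b u hb ha ih =>
    rw [forall_mem_cons] at hδ
    simpa [mergeTop, hb, ha, show a ≠ k + 1 by omega] using
      ih hδ.2 hu (by simpa [ha] using hcount)

theorem filter_pair_mergeTop (hδ : ∀ x ∈ δ, x ≤ k) (hu : ∀ x ∈ u, x = k ∨ x = k + 1)
    (hcount : u.count k = δ.count k) :
    (mergeTop k δ u).filter (fun x => x == k || x == k + 1) = u := by
  fun_induction mergeTop k δ u with
  | case1 u => exact filter_eq_self.mpr fun x hx => by simpa using hu x hx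
  | case2 a δ =>
    refine filter_eq_nil_iff.mpr fun x hx => ?_
    have := hδ x hx
    have : x ≠ k := by rintro rfl; exact (count_pos_iff.mpr hx).ne' (by simpa using hcount.symm)
    simp; omega
  | case3 a δ u ih =>
    rw [forall_mem_cons] at hu
    simpa using ih hδ hu.2 (by simpa using hcount)
  | case4 δ b u hb ih =>
    rw [forall_mem_cons] at hδ hu
    obtain rfl : b = k := hu.1.resolve_right hb
    simpa using ih hδ.2 hu.2 (by simpa using hcount)
  | case5 a δ b u hb ha ih =>
    rw [forall_mem_cons] at hδ
    simpa [mergeTop, hb, ha, show a ≠ k + 1 by omega] using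
      ih hδ.2 hu (by simpa [ha] using hcount)

theorem le_of_mem_mergeTop (hδ : ∀ x ∈ δ, x ≤ k) (hu : ∀ x ∈ u, x = k ∨ x = k + 1)
    (hcount : u.count k = δ.count k) {x : ℕ} (hx : x ∈ mergeTop k δ u) : x ≤ k + 1 := by
  by_cases h : x = k + 1
  · exact h.le
  · have : x ∈ (mergeTop k δ u).filter (· ≠ k + 1) :=
      mem_filter.mpr ⟨hx, by simpa using h⟩
    rw [filter_ne_top_mergeTop hδ hu hcount] at this
    exact (hδ x this).trans k.le_succ

theorem isChain_mergeTop (hδc : IsChain (fun a b => b ≤ a + 1) δ) (hδ : ∀ x ∈ δ, x ≤ k)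
    (hu : ∀ x ∈ u, x = k ∨ x = k + 1) (hcount : u.count k = δ.count k) :
    IsChain (fun a b => b ≤ a + 1) (mergeTop k δ u) := by
  have hle := fun x => le_of_mem_mergeTop (x := x) hδ hu hcount
  fun_induction mergeTop k δ u with
  | case1 u =>
    have hk : k ∉ u := count_eq_zero.mp (by simpa using hcount)
    have : ∀ x ∈ u, x = k + 1 := fun x hx => (hu x hx).resolve_left (by rintro rfl; exact hk hx)
    rw [eq_replicate_iff.mpr ⟨rfl, this⟩]
    exact isChain_replicate_of_rel _ (by omega)
  | case2 a δ => exact hδc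
  | case3 a δ u ih =>
    rw [forall_mem_cons] at hu hle
    refine isChain_cons.mpr ⟨fun y hy => ?_, ih hδc hδ hu.2 (by simpa using hcount) hle.2⟩
    have := hle.2 y (mem_of_mem_head? hy)
    omega
  | case4 δ b u hb ih =>
    rw [forall_mem_cons] at hδ hu hle
    obtain rfl : b = k := hu.1.resolve_right hb
    refine isChain_cons.mpr ⟨fun y hy => hle.2 y (mem_of_mem_head? hy),
      ih hδc.tail hδ.2 hu.2 (by simpa using hcount) hle.2⟩
  | case5 a δ b u hb ha ih =>
    rw [forall_mem_cons] at hδ hle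
    refine isChain_cons.mpr
      ⟨fun y hy => ?_, ih hδc.tail hδ.2 hu (by simpa [ha] using hcount) hle.2⟩
    obtain _ | ⟨d, δ⟩ := δ
    · obtain rfl : b = k := (hu b mem_cons_self).resolve_right hb
      simp [ha] at hcount
    · rw [head?_mergeTop_cons d (by simpa using hb)] at hy
      obtain rfl := Option.some.inj hy
      exact (isChain_cons_cons.mp hδc).1

theorem mergeTop_filter_self {γ : List ℕ} (hc : IsChain (fun a b => b ≤ a + 1) γ)
    (hγ : ∀ x ∈ γ, x ≤ k + 1) :
    mergeTop k (γ.filter (· ≠ k + 1)) (γ.filter (fun x => x == k || x == k + 1)) = γ := by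
  induction γ with
  | nil => simp [mergeTop]
  | cons c γ ih =>
    rw [forall_mem_cons] at hγ
    obtain ⟨hstep, hc⟩ := isChain_cons.mp hc
    have ih := ih hc hγ.2
    rcases (show c = k + 1 ∨ c = k ∨ c < k by omega) with rfl | rfl | hck
    · simpa [filter_cons] using ih
    · simpa [filter_cons] using ih
    · have hhead : ∀ y ∈ γ.head?, y ≤ k := fun y hy => by
        have := hstep y hy
        omega
      rw [filter_cons_of_pos (by simpa using show c ≠ k + 1 by omega),
        filter_cons_of_neg (by simpa using ⟨hck.ne, show c ≠ k + 1 by omega⟩),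
        mergeTop_cons_of_ne hck.ne (head?_filter_pair_ne_top hc hhead), ih]

end mergeTop

def IsInterleaving (m : ℕ → ℕ) (w : ℕ → List ℕ) (t : ℕ) (γ : List ℕ) : Prop :=
  γ.length = ∑ i ∈ Finset.range (t - 1), m i ∧ PermittedSeq t γ ∧
    ∀ i, i + 3 ≤ t → γ.filter (fun x => x == i || x == i + 1) = w i

section IsInterleaving

variable {m : ℕ → ℕ} {w : ℕ → List ℕ} {k : ℕ} {γ : List ℕ}

theorem existsUnique_isInterleaving_two (h0 : 0 < m 0) :
    ∃! γ, IsInterleaving m w 2 γ := by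
  refine ⟨replicate (m 0) 0, ⟨by simp, ⟨?_, isChain_replicate_of_rel _ (by omega), by simp⟩,
    by omega⟩, fun γ ⟨hlen, ⟨_, _, hγ⟩, _⟩ => ?_⟩
  · obtain ⟨n, hn⟩ := Nat.exists_eq_add_of_lt h0
    simp [hn, replicate_succ]
  · exact eq_replicate_iff.mpr ⟨by simpa using hlen, fun x hx => by simpa using hγ x hx⟩

theorem IsInterleaving.count_top (hγ : IsInterleaving m w (k + 2) γ)
    (hw : ∀ i, i + 3 ≤ k + 2 → (w i).count (i + 1) = m (i + 1)) : γ.count k = m k := by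
  obtain ⟨hlen, ⟨_, _, hle⟩, hfilter⟩ := hγ
  cases k with
  | zero =>
    have hzero : ∀ x ∈ γ, 0 = x := fun x hx => by simpa [eq_comm] using hle x hx
    simpa [count_eq_length.mpr hzero] using hlen
  | succ j =>
    rw [← count_filter (p := fun x => x == j || x == j + 1) (by simp), hfilter j (by omega),
      hw j (by omega)]

theorem IsInterleaving.filter_ne_top (hγ : IsInterleaving m w (k + 3) γ)
    (hwk : (w k).count (k + 1) = m (k + 1)) :
    IsInterleaving m w (k + 2) (γ.filter (· ≠ k + 1)) := by
  obtain ⟨hlen, ⟨hhead, hc, hle⟩, hfilter⟩ := hγ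
  refine ⟨?_, ⟨?_, isChain_filter_ne_top hc (by simpa using hle), fun x hx => ?_⟩,
    fun i hi => ?_⟩
  · rw [length_eq_length_filter_ne_add_count (k := k), hfilter k (by omega), hwk] at hlen
    simpa [Finset.sum_range_succ] using hlen
  · obtain ⟨γ, rfl⟩ : ∃ l, γ = 0 :: l := ⟨γ.tail, (cons_head?_tail hhead).symm⟩
    simp
  · rw [mem_filter] at hx
    have := hle x hx.1
    simp at hx ⊢
    omega
  · rw [filter_pair_filter_ne_top (by omega), hfilter i (by omega)]

theorem IsInterleaving.mergeTop (hγ : IsInterleaving m w (k + 2) γ)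
    (hw : ∀ x ∈ w k, x = k ∨ x = k + 1) (hcount : (w k).count k = γ.count k)
    (hcount_succ : (w k).count (k + 1) = m (k + 1)) (hhead : (w k).head? = some k) :
    IsInterleaving m w (k + 3) (mergeTop k γ (w k)) := by
  obtain ⟨hlen, ⟨h0, hc, hle⟩, hfilter⟩ := hγ
  have hle : ∀ x ∈ γ, x ≤ k := by simpa using hle
  have hF := filter_ne_top_mergeTop hle hw hcount
  have hP := filter_pair_mergeTop hle hw hcount
  refine ⟨?_, ⟨?_, isChain_mergeTop hc hle hw hcount,
    fun x hx => by simpa using le_of_mem_mergeTop hle hw hcount hx⟩, fun i hi => ?_⟩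
  · rw [length_eq_length_filter_ne_add_count (k := k), hF, hP, hlen, hcount_succ]
    simp [Finset.sum_range_succ]
  · obtain ⟨γ, rfl⟩ : ∃ l, γ = 0 :: l := ⟨γ.tail, (cons_head?_tail h0).symm⟩
    exact head?_mergeTop_cons 0 (by simp [hhead])
  · rcases (show i = k ∨ i < k by omega) with rfl | hi
    · exact hP
    · rw [← filter_pair_filter_ne_top hi, hF, hfilter i (by omega)]

theorem existsUnique_isInterleaving_succ {t : ℕ} (ht : 2 ≤ t)
    (hw : ∀ i, i + 3 ≤ t + 1 →
      (∀ x ∈ w i, x = i ∨ x = i + 1) ∧ (w i).count i = m i ∧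
      (w i).count (i + 1) = m (i + 1) ∧ (w i).head? = some i)
    (h : ∃! δ, IsInterleaving m w t δ) : ∃! γ, IsInterleaving m w (t + 1) γ := by
  obtain ⟨k, rfl⟩ := Nat.exists_eq_add_of_le' ht
  obtain ⟨δ, hδ, hδ_unique⟩ := h
  obtain ⟨hwk, hwk_count, hcount_succ, hhead⟩ := hw k (by omega)
  have hcount : (w k).count k = δ.count k :=
    hwk_count.trans (hδ.count_top fun i hi => (hw i (by omega)).2.2.1).symm
  refine ⟨mergeTop k δ (w k), hδ.mergeTop hwk hcount hcount_succ hhead, fun γ hγ => ?_⟩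
  have ⟨_, ⟨_, hc, hle⟩, hfilter⟩ := hγ
  rw [← mergeTop_filter_self hc (by simpa using hle),
    hδ_unique _ (hγ.filter_ne_top hcount_succ), hfilter k (by omega)]

end IsInterleaving

/-- Given `t ≥ 2`, positive multiplicities `m 0, …, m (t-2)`, and for each `0 ≤ i ≤ t-3`
a word `w i` over the alphabet `{i, i+1}` with exactly `m i` entries equal to `i`,
exactly `m (i+1)` entries equal to `i+1`, and first entry `i`, there is exactly one
permitted sequence of parameters `(m 0 + ⋯ + m (t-2), t)` whose subsequence of entries
in `{i, i+1}` equals `w i` for every `0 ≤ i ≤ t-3`. -/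
theorem existsUnique_permitted_seq (t : ℕ) (ht : 2 ≤ t)
    (m : ℕ → ℕ) (hm : ∀ i, i + 2 ≤ t → 0 < m i)
    (w : ℕ → List ℕ)
    (hw : ∀ i, i + 3 ≤ t →
      (∀ x ∈ w i, x = i ∨ x = i + 1) ∧
      (w i).count i = m i ∧
      (w i).count (i + 1) = m (i + 1) ∧
      (w i).head? = some i) :
    ∃! γ : List ℕ,
      γ.length = ∑ i ∈ Finset.range (t - 1), m i ∧ PermittedSeq t γ ∧
      ∀ i, i + 3 ≤ t → γ.filter (fun x => x == i || x == i + 1) = w i := by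
  induction t, ht using Nat.le_induction with
  | base => exact existsUnique_isInterleaving_two (hm 0 le_rfl)
  | succ t ht ih =>
    exact existsUnique_isInterleaving_succ ht hw
      (ih (fun i hi => hm i (by omega)) (fun i hi => hw i (by omega)))
end

section
/- Let t ≥ 2 and let m₀, m₁, …, m_{t−2} be positive integers with m = m₀+m₁+⋯+m_{t−2}. Then the number of permitted sequences of parameters (m, t) in which the value i appears exactly m_i times for each 0 ≤ i ≤ t−2 equals Π_{i=0}^{t−3} binom(m_i + m_{i+1} − 1, m_i − 1). -/
namespace List

variable {α : Type*}

theorem replicate_append_inj {b : α} {c c' : ℕ} {l l' : List α} (hl : l.head? ≠ some b)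
    (hl' : l'.head? ≠ some b) (h : replicate c b ++ l = replicate c' b ++ l') :
    c = c' ∧ l = l' := by
  induction c generalizing c' with
  | zero => cases c' <;> grind
  | succ c ih => cases c' <;> grind

variable [DecidableEq α] (a b : α)

/-- After the `i`-th occurrence of `a`, insert a run of `cs[i]` copies of `b`
(missing entries of `cs` count as `0`, surplus ones are ignored). -/
def insertRuns : List α → List ℕ → List α
  | [], _ => []
  | x :: l, cs =>
    if x = a then x :: (replicate cs.headI b ++ insertRuns l cs.tail)
    else x :: insertRuns l cs

variable {a b}

@[simp]
theorem insertRuns_nil (cs : List ℕ) : insertRuns a b [] cs = [] := rfl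

theorem insertRuns_cons_self (l : List α) (c : ℕ) (cs : List ℕ) :
    insertRuns a b (a :: l) (c :: cs) = a :: (replicate c b ++ insertRuns a b l cs) := by
  simp [insertRuns]

theorem insertRuns_cons_of_ne {x : α} (hx : x ≠ a) (l : List α) (cs : List ℕ) :
    insertRuns a b (x :: l) cs = x :: insertRuns a b l cs := by
  simp [insertRuns, hx]

@[simp]
theorem head?_insertRuns (l : List α) (cs : List ℕ) : (insertRuns a b l cs).head? = l.head? := by
  cases l with
  | nil => rfl
  | cons x l => rw [insertRuns]; split <;> rfl

theorem mem_insertRuns {x : α} {l : List α} {cs : List ℕ} (hx : x ∈ insertRuns a b l cs) :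
    x ∈ l ∨ x = b := by
  induction l generalizing cs with
  | nil => simp at hx
  | cons y l ih =>
    rw [insertRuns] at hx
    split at hx <;> grind

theorem count_insertRuns_of_ne {x : α} (hx : x ≠ b) (l : List α) (cs : List ℕ) :
    (insertRuns a b l cs).count x = l.count x := by
  induction l generalizing cs with
  | nil => rfl
  | cons y l ih =>
    rw [insertRuns]
    split <;> simp [count_cons, count_replicate, hx.symm, ih]

theorem count_insertRuns_self {l : List α} {cs : List ℕ} (h : cs.length = l.count a) :
    (insertRuns a b l cs).count b = l.count b + cs.sum := by
  induction l generalizing cs with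
  | nil => simp_all
  | cons y l ih =>
    by_cases hy : y = a
    · subst hy
      obtain ⟨c, cs, rfl⟩ := exists_cons_of_length_eq_add_one (h.trans (count_cons_self ..))
      simp only [insertRuns_cons_self, count_cons, count_append, count_replicate_self,
        ih (by simpa using h), beq_iff_eq, sum_cons]
      omega
    · rw [count_cons_of_ne hy] at h
      simp only [insertRuns_cons_of_ne hy, count_cons, ih h, beq_iff_eq]
      omega

theorem filter_insertRuns {l : List α} (hb : b ∉ l) (cs : List ℕ) :
    (insertRuns a b l cs).filter (· ≠ b) = l := by
  induction l generalizing cs with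
  | nil => rfl
  | cons y l ih =>
    rw [mem_cons, not_or] at hb
    have hy : y ≠ b := Ne.symm hb.1
    rw [insertRuns]
    split <;> simpa [filter_append, filter_replicate, hy] using ih hb.2 _

theorem eq_of_insertRuns_eq_insertRuns {l : List α} (hb : b ∉ l) {cs cs' : List ℕ}
    (hcs : cs.length = l.count a) (hcs' : cs'.length = l.count a)
    (h : insertRuns a b l cs = insertRuns a b l cs') : cs = cs' := by
  induction l generalizing cs cs' with
  | nil => simp_all
  | cons y l ih =>
    rw [mem_cons, not_or] at hb
    have hl (ds : List ℕ) : (insertRuns a b l ds).head? ≠ some b :=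
      fun h => hb.2 (mem_of_mem_head? (by simpa using h))
    by_cases hy : y = a
    · subst hy
      obtain ⟨c, cs, rfl⟩ := exists_cons_of_length_eq_add_one (hcs.trans (count_cons_self ..))
      obtain ⟨c', cs', rfl⟩ :=
        exists_cons_of_length_eq_add_one (hcs'.trans (count_cons_self ..))
      rw [insertRuns_cons_self, insertRuns_cons_self, cons_inj_right] at h
      obtain ⟨rfl, h⟩ := replicate_append_inj (hl _) (hl _) h
      rw [ih hb.2 (by simpa using hcs) (by simpa using hcs') (append_cancel_left h)]
    · rw [count_cons_of_ne hy] at hcs hcs'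
      rw [insertRuns_cons_of_ne hy, insertRuns_cons_of_ne hy, cons_inj_right] at h
      exact ih hb.2 hcs hcs' h

theorem exists_eq_replicate_append_insertRuns {l : List α}
    (hl : IsChain (fun x y => y = b → x = a ∨ x = b) l) :
    ∃ n cs, cs.length = (l.filter (· ≠ b)).count a ∧
      l = replicate n b ++ insertRuns a b (l.filter (· ≠ b)) cs := by
  induction l with
  | nil => exact ⟨0, [], rfl, rfl⟩
  | cons y l ih =>
    obtain ⟨hy, hl⟩ := isChain_cons.mp hl
    obtain ⟨n, cs, hcs, hl⟩ := ih hl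
    by_cases hyb : y = b
    · subst hyb
      exact ⟨n + 1, cs, by simpa using hcs, by simpa [replicate_succ] using hl⟩
    by_cases hya : y = a
    · subst hya
      refine ⟨0, n :: cs, by simpa [filter_cons, hyb] using hcs, ?_⟩
      simpa [filter_cons, hyb, insertRuns_cons_self] using hl
    · obtain rfl : n = 0 := by
        by_contra hn
        obtain ⟨n, rfl⟩ := Nat.exists_eq_succ_of_ne_zero hn
        exact (hy b (by rw [hl]; simp [replicate_succ]) rfl).elim hya hyb
      refine ⟨0, cs, by simpa [filter_cons, hyb, count_cons_of_ne hya] using hcs, ?_⟩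
      simpa [filter_cons, hyb, insertRuns_cons_of_ne hya] using hl

theorem exists_eq_insertRuns {l : List α} (hhead : l.head? ≠ some b)
    (hl : IsChain (fun x y => y = b → x = a ∨ x = b) l) :
    ∃ cs, cs.length = (l.filter (· ≠ b)).count a ∧
      l = insertRuns a b (l.filter (· ≠ b)) cs := by
  obtain ⟨n, cs, hcs, hl⟩ := exists_eq_replicate_append_insertRuns hl
  obtain rfl : n = 0 := by
    by_contra hn
    obtain ⟨n, rfl⟩ := Nat.exists_eq_succ_of_ne_zero hn
    rw [hl] at hhead
    simp [replicate_succ] at hhead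
  exact ⟨cs, hcs, hl⟩

theorem insertRuns_inj {l l' : List α} {cs cs' : List ℕ} (hb : b ∉ l) (hb' : b ∉ l')
    (hcs : cs.length = l.count a) (hcs' : cs'.length = l'.count a)
    (h : insertRuns a b l cs = insertRuns a b l' cs') :
    l = l' ∧ cs = cs' := by
  obtain rfl : l = l' := by rw [← filter_insertRuns hb cs, h, filter_insertRuns hb']
  exact ⟨rfl, eq_of_insertRuns_eq_insertRuns hb hcs hcs' h⟩

end List

theorem List.length_eq_sum_count_of_forall_le {L : ℕ} {l : List ℕ} (h : ∀ x ∈ l, x ≤ L) :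
    l.length = ∑ i ∈ Finset.range (L + 1), l.count i := by
  simpa using (Multiset.sum_count_eq_card (s := Finset.range (L + 1)) (m := (l : Multiset ℕ))
    (by simpa [Nat.lt_succ_iff] using h)).symm

theorem ncard_setOf_length_eq_and_sum_eq (K n : ℕ) :
    {cs : List ℕ | cs.length = K ∧ cs.sum = n}.ncard = (K + n - 1).choose n := by
  have h : {cs : List ℕ | cs.length = K ∧ cs.sum = n} =
      List.ofFn '' {f : Fin K → ℕ | ∑ i, f i = n} := by
    ext cs
    constructor
    · rintro ⟨rfl, rfl⟩
      exact ⟨fun i => cs[i], by simp [← List.sum_ofFn], List.ofFn_getElem⟩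
    · rintro ⟨f, hf, rfl⟩
      simpa [List.sum_ofFn] using hf
  rw [h, Set.ncard_image_of_injective _ List.ofFn_injective, ← Nat.card_coe_set_eq,
    Nat.card_congr ((Equiv.subtypeEquivRight fun f => by simp).trans
      (Sym.equivNatSumOfFintype (Fin K) n).symm),
    Sym.natCard_sym_eq_choose, Nat.card_fin]

open List

section StepChain

variable {k : ℕ}

theorem isChain_cons_replicate_append {x c : ℕ} (hx : k ≤ x) {l : List ℕ}
    (hl : IsChain (fun a b => b ≤ a + 1) l) (hhead : ∀ y ∈ l.head?, y ≤ k + 1) :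
    IsChain (fun a b => b ≤ a + 1) (x :: (replicate c (k + 1) ++ l)) := by
  induction c generalizing x with
  | zero => exact isChain_cons.mpr ⟨fun y hy => (hhead y hy).trans (by omega), hl⟩
  | succ c ih => exact isChain_cons_cons.mpr ⟨by omega, ih k.le_succ⟩

theorem isChain_insertRuns {l : List ℕ} (hk : ∀ x ∈ l, x ≤ k)
    (hl : IsChain (fun a b => b ≤ a + 1) l) (cs : List ℕ) :
    IsChain (fun a b => b ≤ a + 1) (insertRuns k (k + 1) l cs) := by
  induction l generalizing cs with
  | nil => exact .nil
  | cons y l ih =>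
    obtain ⟨hy, hl⟩ := isChain_cons.mp hl
    have hk' : ∀ x ∈ l, x ≤ k := fun x hx => hk x (mem_cons_of_mem _ hx)
    rw [insertRuns]
    split
    · refine isChain_cons_replicate_append (by omega) (ih hk' hl _) fun z hz => ?_
      rw [head?_insertRuns] at hz
      exact (hk' z (mem_of_mem_head? hz)).trans (by omega)
    · exact isChain_cons.mpr ⟨by simpa using hy, ih hk' hl cs⟩

theorem isChain_of_isChain_insertRuns {l cs : List ℕ} (hk : ∀ x ∈ l, x ≤ k)
    (h : IsChain (fun a b => b ≤ a + 1) (insertRuns k (k + 1) l cs)) :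
    IsChain (fun a b => b ≤ a + 1) l := by
  induction l generalizing cs with
  | nil => exact .nil
  | cons y l ih =>
    have hk' : ∀ x ∈ l, x ≤ k := fun x hx => hk x (mem_cons_of_mem _ hx)
    rw [insertRuns] at h
    split at h
    · refine isChain_cons.mpr
        ⟨fun z hz => ?_, ih (cs := cs.tail) hk' (h.tail.suffix (suffix_append _ _))⟩
      have := hk' z (mem_of_mem_head? hz)
      omega
    · obtain ⟨hy, h⟩ := isChain_cons.mp h
      exact isChain_cons.mpr ⟨by simpa using hy, ih hk' h⟩

end StepChain

def permittedSeqsWithCounts (L : ℕ) (m : ℕ → ℕ) : Set (List ℕ) :=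
  {γ | γ.head? = some 0 ∧ IsChain (fun a b => b ≤ a + 1) γ ∧ (∀ x ∈ γ, x ≤ L) ∧
    ∀ i ≤ L, γ.count i = m i}

section PermittedSeqsWithCounts

variable {L : ℕ} {m : ℕ → ℕ}

theorem permittedSeqsWithCounts_zero (hm : 0 < m 0) :
    permittedSeqsWithCounts 0 m = {replicate (m 0) 0} := by
  ext γ
  simp only [permittedSeqsWithCounts, Set.mem_ofPred_eq, Set.mem_singleton_iff, Nat.le_zero,
    forall_eq]
  constructor
  · rintro ⟨-, -, h0, hm⟩
    rw [eq_replicate_iff, ← hm, count_eq_length.mpr fun x hx => (h0 x hx).symm]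
    exact ⟨rfl, h0⟩
  · rintro rfl
    obtain ⟨n, hn⟩ := Nat.exists_eq_succ_of_ne_zero hm.ne'
    refine ⟨by simp [hn, replicate_succ], isChain_replicate_of_rel _ (Nat.le_succ 0),
      fun x hx => eq_of_mem_replicate hx, count_replicate_self⟩

theorem insertRuns_mem_permittedSeqsWithCounts_succ_iff {γ cs : List ℕ}
    (hγ : ∀ x ∈ γ, x ≤ L) (hcs : cs.length = γ.count L) :
    insertRuns L (L + 1) γ cs ∈ permittedSeqsWithCounts (L + 1) m ↔
      γ ∈ permittedSeqsWithCounts L m ∧ cs.sum = m (L + 1) := by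
  have hcount : ∀ i ≤ L, (insertRuns L (L + 1) γ cs).count i = γ.count i :=
    fun i hi => count_insertRuns_of_ne (by omega) γ cs
  have htop : (insertRuns L (L + 1) γ cs).count (L + 1) = cs.sum := by
    rw [count_insertRuns_self hcs, count_eq_zero_of_not_mem fun h => by have := hγ _ h; omega,
      zero_add]
  simp only [permittedSeqsWithCounts, Set.mem_ofPred_eq, head?_insertRuns]
  constructor
  · rintro ⟨h0, hc, -, hm⟩
    exact ⟨⟨h0, isChain_of_isChain_insertRuns hγ hc, hγ,
      fun i hi => (hcount i hi).symm.trans (hm i (by omega))⟩, htop ▸ hm (L + 1) le_rfl⟩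
  · rintro ⟨⟨h0, hc, -, hm⟩, hsum⟩
    refine ⟨h0, isChain_insertRuns hγ hc cs, fun x hx => ?_, fun i hi => ?_⟩
    · rcases mem_insertRuns hx with hx | rfl
      · exact (hγ x hx).trans L.le_succ
      · exact le_rfl
    · rcases hi.lt_or_eq with hi | rfl
      · rw [hcount i (by omega), hm i (by omega)]
      · rw [htop, hsum]

theorem permittedSeqsWithCounts_succ :
    permittedSeqsWithCounts (L + 1) m = Function.uncurry (insertRuns L (L + 1)) ''
      (permittedSeqsWithCounts L m ×ˢ {cs | cs.length = m L ∧ cs.sum = m (L + 1)}) := by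
  ext γ
  constructor
  · intro hγ
    obtain ⟨h0, hc, hb, -⟩ := id hγ
    have hb' : ∀ x ∈ γ.filter (· ≠ L + 1), x ≤ L := by
      intro x hx
      rw [mem_filter, decide_eq_true_iff] at hx
      have := hb x hx.1
      omega
    obtain ⟨cs, hcs, hγcs⟩ := exists_eq_insertRuns (a := L) (b := L + 1) (by simp [h0])
      (hc.imp_of_mem_imp fun x y hx _ hxy hy => by have := hb x hx; omega)
    rw [hγcs, insertRuns_mem_permittedSeqsWithCounts_succ_iff hb' hcs] at hγ
    exact ⟨(_, cs), ⟨hγ.1, hcs.trans (hγ.1.2.2.2 L le_rfl), hγ.2⟩, hγcs.symm⟩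
  · rintro ⟨⟨γ, cs⟩, ⟨hγ, hlen, hsum⟩, rfl⟩
    exact (insertRuns_mem_permittedSeqsWithCounts_succ_iff hγ.2.2.1
      (hlen.trans (hγ.2.2.2 L le_rfl).symm)).2 ⟨hγ, hsum⟩

theorem injOn_uncurry_insertRuns :
    Set.InjOn (Function.uncurry (insertRuns L (L + 1)))
      (permittedSeqsWithCounts L m ×ˢ {cs | cs.length = m L ∧ cs.sum = m (L + 1)}) := by
  rintro ⟨γ, cs⟩ ⟨hγ, hcs, -⟩ ⟨γ', cs'⟩ ⟨hγ', hcs', -⟩ h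
  have hnot {δ : List ℕ} (hδ : δ ∈ permittedSeqsWithCounts L m) : L + 1 ∉ δ :=
    fun h => by have := hδ.2.2.1 _ h; omega
  obtain ⟨rfl, rfl⟩ := insertRuns_inj (hnot hγ) (hnot hγ')
    (hcs.trans (hγ.2.2.2 L le_rfl).symm) (hcs'.trans (hγ'.2.2.2 L le_rfl).symm) h
  rfl

theorem ncard_permittedSeqsWithCounts_succ (hm : 0 < m L) :
    (permittedSeqsWithCounts (L + 1) m).ncard =
      (permittedSeqsWithCounts L m).ncard * (m L + m (L + 1) - 1).choose (m L - 1) := by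
  rw [permittedSeqsWithCounts_succ, injOn_uncurry_insertRuns.ncard_image, Set.ncard_prod,
    ncard_setOf_length_eq_and_sum_eq]
  obtain ⟨K, hK⟩ := Nat.exists_eq_succ_of_ne_zero hm.ne'
  rw [hK, Nat.succ_add_sub_one, Nat.succ_sub_one, Nat.choose_symm_add]

theorem ncard_permittedSeqsWithCounts (hm : ∀ i ≤ L, 0 < m i) :
    (permittedSeqsWithCounts L m).ncard =
      ∏ i ∈ Finset.range L, (m i + m (i + 1) - 1).choose (m i - 1) := by
  induction L with
  | zero => simp [permittedSeqsWithCounts_zero (hm 0 le_rfl)]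
  | succ L ih =>
    rw [ncard_permittedSeqsWithCounts_succ (hm L L.le_succ), ih fun i hi => hm i (by omega),
      Finset.prod_range_succ]

end PermittedSeqsWithCounts

theorem setOf_permittedSeq_eq_permittedSeqsWithCounts (L : ℕ) (m : ℕ → ℕ) :
    {γ : List ℕ | γ.length = ∑ i ∈ Finset.range (L + 1), m i ∧ PermittedSeq (L + 2) γ ∧
      ∀ i, i + 2 ≤ L + 2 → γ.count i = m i} = permittedSeqsWithCounts L m := by
  ext γ
  simp only [PermittedSeq, permittedSeqsWithCounts, Set.mem_ofPred_eq, Nat.add_sub_cancel,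
    Nat.add_le_add_iff_right]
  constructor
  · rintro ⟨-, ⟨h0, hc, hb⟩, hm⟩
    exact ⟨h0, hc, hb, hm⟩
  · rintro ⟨h0, hc, hb, hm⟩
    refine ⟨?_, ⟨h0, hc, hb⟩, hm⟩
    rw [length_eq_sum_count_of_forall_le hb]
    exact Finset.sum_congr rfl fun i hi => hm i (Nat.lt_succ_iff.mp (Finset.mem_range.mp hi))

/-- For `t ≥ 2` and positive multiplicities `m 0, …, m (t-2)` summing to `m`, the number
of permitted sequences of parameters `(m, t)` in which the value `i` appears exactly
`m i` times for each `0 ≤ i ≤ t-2` equals `∏_{i=0}^{t-3} C(m i + m (i+1) - 1, m i - 1)`. -/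
theorem card_permitted_seqs_with_multiplicities (t : ℕ) (ht : 2 ≤ t)
    (m : ℕ → ℕ) (hm : ∀ i, i + 2 ≤ t → 0 < m i) :
    {γ : List ℕ | γ.length = ∑ i ∈ Finset.range (t - 1), m i ∧ PermittedSeq t γ ∧
        ∀ i, i + 2 ≤ t → γ.count i = m i}.ncard
      = ∏ i ∈ Finset.range (t - 2), Nat.choose (m i + m (i + 1) - 1) (m i - 1) := by
  obtain ⟨L, rfl⟩ : ∃ L, t = L + 2 := ⟨t - 2, by omega⟩
  rw [Nat.add_sub_cancel, show L + 2 - 1 = L + 1 by omega,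
    setOf_permittedSeq_eq_permittedSeqsWithCounts,
    ncard_permittedSeqsWithCounts fun i hi => hm i (by omega)]
end

section
/- With t(k) = ⌊√k⌋ (the integer part of the square root of k), the limit inferior as k → ∞ of Γ(k − 2·t(k), t(k))^{1/k} (real k-th roots) is at least 4. -/
/-- `Γ(m, t)`: the number of permitted sequences of parameters `(m, t)`. -/
noncomputable def permittedCount (m t : ℕ) : ℕ :=
  {γ : List ℕ | γ.length = m ∧ PermittedSeq t γ}.ncard

/-!
Read as a plane forest, a binary tree with `L` nodes has a preorder list of node depths that is
a permitted sequence with entries below `L`, and distinct trees give distinct lists. Prefixing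
these lists to permitted sequences gives `Γ(L + m, t) ≥ C_L · Γ(m, t)` for `L < t`, hence
`Γ(m, t) ≥ C_L ^ ⌊(m - 1) / L⌋`; as `C_L ^ (1 / L) → 4`, the `k`-th roots of `Γ(m_k, t_k)` are
eventually above any `a < 4` once `m_k / k → 1` and `t_k → ∞`. In the other direction, the unary
code of the drops `γ_i + 1 - γ_{i+1}` embeds permitted sequences of length `m` into Boolean words
of length `2m`, so `Γ(m, t) ≤ 4 ^ m` and the `k`-th roots in fact converge to `4`.
-/

open Filter Topology

theorem catalan_pos (n : ℕ) : 0 < catalan n :=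
  Nat.pos_of_mul_pos_left ((succ_mul_catalan_eq_centralBinom n).symm ▸ n.centralBinom_pos)

namespace BinaryTree

/-- Reading `T` as a plane forest (left child = first child, right child = next sibling),
`depths d T` lists the depths of its nodes in preorder, the roots having depth `d`. -/
def depths (d : ℕ) : BinaryTree Unit → List ℕ
  | nil => []
  | node _ l r => d :: (depths (d + 1) l ++ depths d r)

variable {d : ℕ} {T : BinaryTree Unit}

theorem length_depths : (depths d T).length = T.numNodes := by
  induction T generalizing d with
  | nil => rfl
  | node _ l r ihl ihr => simp [depths, numNodes, ihl, ihr]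

theorem mem_depths {x : ℕ} (hx : x ∈ depths d T) : d ≤ x ∧ x < d + T.numNodes := by
  induction T generalizing d with
  | nil => simp [depths] at hx
  | node _ l r ihl ihr =>
    simp only [depths, List.mem_cons, List.mem_append] at hx
    rcases hx with rfl | hx | hx
    · simp [numNodes]
    · have := ihl hx; simp only [numNodes]; omega
    · have := ihr hx; simp only [numNodes]; omega

theorem head?_depths_append_le {u : List ℕ} (hu : ∀ y ∈ u.head?, y ≤ d) :
    ∀ y ∈ (depths d T ++ u).head?, y ≤ d := by
  cases T <;> simp_all [depths]

theorem head?_depths_le : ∀ y ∈ (depths d T).head?, y ≤ d := by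
  simpa using head?_depths_append_le (T := T) (u := []) (by simp)

theorem isChain_depths : (depths d T).IsChain (fun a b => b ≤ a + 1) := by
  induction T generalizing d with
  | nil => exact .nil
  | node _ l r ihl ihr =>
    refine .cons (ihl.append ihr fun x hx y hy => ?_) fun y hy => ?_
    · have := (mem_depths (List.mem_of_mem_getLast? hx)).1
      have := head?_depths_le y hy
      omega
    · exact head?_depths_append_le (fun y hy => (head?_depths_le y hy).trans d.le_succ) y hy

theorem depths_append_inj {T' : BinaryTree Unit} {u u' : List ℕ} (hu : ∀ y ∈ u.head?, y < d)
    (hu' : ∀ y ∈ u'.head?, y < d) (h : depths d T ++ u = depths d T' ++ u') :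
    T = T' ∧ u = u' := by
  induction T generalizing d T' u u' with
  | nil =>
    cases T' with
    | nil => exact ⟨rfl, h⟩
    | node _ l' r' => subst h; simp [depths] at hu
  | node _ l r ihl ihr =>
    cases T' with
    | nil => subst h; simp [depths] at hu'
    | node _ l' r' =>
      simp only [depths, List.cons_append, List.cons.injEq, List.append_assoc, true_and] at h
      obtain ⟨rfl, hr⟩ := ihl (fun y hy => Nat.lt_succ_of_le (head?_depths_append_le
        (fun y hy => (hu y hy).le) y hy)) (fun y hy => Nat.lt_succ_of_le
        (head?_depths_append_le (fun y hy => (hu' y hy).le) y hy)) h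
      obtain ⟨rfl, rfl⟩ := ihr hu hu' hr
      exact ⟨rfl, rfl⟩

theorem depths_injective : Function.Injective (depths 0) := fun _ _ h =>
  (depths_append_inj (u := []) (u' := []) (by simp) (by simp) (by simpa using h)).1

end BinaryTree

open List in
theorem List.replicate_append_cons_inj {α : Type*} {a b : α} (hab : a ≠ b) {n n' : ℕ}
    {u u' : List α} (h : replicate n a ++ b :: u = replicate n' a ++ b :: u') :
    n = n' ∧ u = u' := by
  induction n generalizing n' with
  | zero => cases n' <;> simp_all [replicate_succ, eq_comm]
  | succ n ih =>
    cases n' with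
    | zero => simp [replicate_succ, hab] at h
    | succ n' => simpa using ih (by simpa [replicate_succ] using h)

theorem List.ncard_setOf_length_eq {α : Type*} [Fintype α] (n : ℕ) :
    {w : List α | w.length = n}.ncard = Fintype.card α ^ n := by
  rw [← Nat.card_coe_set_eq]
  exact (Nat.card_eq_fintype_card (α := List.Vector α n)).trans (card_vector n)

def dropCode : ℕ → List ℕ → List Bool
  | _, [] => []
  | a, b :: l => List.replicate (a + 1 - b) false ++ true :: dropCode b l

theorem length_dropCode_le {a : ℕ} {l : List ℕ} (hl : (a :: l).IsChain (fun a b => b ≤ a + 1)) :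
    (dropCode a l).length ≤ 2 * l.length + a := by
  induction l generalizing a with
  | nil => simp [dropCode]
  | cons b l ih =>
    have hab := List.isChain_cons_cons.1 hl
    have := ih hab.2
    simp only [dropCode, List.length_append, List.length_replicate, List.length_cons]
    omega

theorem dropCode_append_replicate_inj {a p p' : ℕ} {l l' : List ℕ}
    (hl : (a :: l).IsChain (fun a b => b ≤ a + 1)) (hl' : (a :: l').IsChain (fun a b => b ≤ a + 1))
    (h : dropCode a l ++ List.replicate p false = dropCode a l' ++ List.replicate p' false) :
    l = l' := by
  induction l generalizing a l' with
  | nil =>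
    cases l' with
    | nil => rfl
    | cons => simpa [dropCode] using congrArg (true ∈ ·) h
  | cons b l ih =>
    cases l' with
    | nil => simpa [dropCode] using congrArg (true ∈ ·) h
    | cons b' l' =>
      simp only [dropCode, List.append_assoc, List.cons_append] at h
      obtain ⟨hb, h⟩ := List.replicate_append_cons_inj Bool.false_ne_true h
      have hab := List.isChain_cons_cons.1 hl
      have hab' := List.isChain_cons_cons.1 hl'
      obtain rfl : b = b' := by omega
      rw [ih hab.2 hab'.2 h]

def permittedSeqs (m t : ℕ) : Set (List ℕ) := {γ | γ.length = m ∧ PermittedSeq t γ}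

theorem PermittedSeq.isChain_zero_cons {t : ℕ} {γ : List ℕ} (hγ : PermittedSeq t γ) :
    (0 :: γ).IsChain (fun a b => b ≤ a + 1) :=
  List.isChain_cons.2 ⟨fun y hy => by simp [hγ.1] at hy; omega, hγ.2.1⟩

def paddedCode (m : ℕ) (γ : List ℕ) : List Bool :=
  dropCode 0 γ ++ List.replicate (2 * m - (dropCode 0 γ).length) false

section

variable {m t : ℕ}

theorem mapsTo_paddedCode :
    Set.MapsTo (paddedCode m) (permittedSeqs m t) {w | w.length = 2 * m} := by
  rintro γ ⟨rfl, hγ⟩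
  have := length_dropCode_le hγ.isChain_zero_cons
  simp only [paddedCode, Set.mem_ofPred_eq, List.length_append, List.length_replicate]
  omega

theorem injOn_paddedCode : Set.InjOn (paddedCode m) (permittedSeqs m t) :=
  fun _ hγ _ hγ' h =>
    dropCode_append_replicate_inj hγ.2.isChain_zero_cons hγ'.2.isChain_zero_cons h

theorem permittedSeqs_finite : (permittedSeqs m t).Finite :=
  .of_finite_image ((List.finite_length_eq Bool (2 * m)).subset mapsTo_paddedCode.image_subset)
    injOn_paddedCode

theorem permittedCount_le_four_pow : permittedCount m t ≤ 4 ^ m := by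
  calc permittedCount m t ≤ {w : List Bool | w.length = 2 * m}.ncard :=
        Set.ncard_le_ncard_of_injOn _ mapsTo_paddedCode injOn_paddedCode
          (List.finite_length_eq Bool (2 * m))
    _ = 4 ^ m := by rw [List.ncard_setOf_length_eq, Fintype.card_bool, pow_mul]; norm_num

theorem PermittedSeq.depths_append {T : BinaryTree Unit} {γ : List ℕ} (hT : T.numNodes + 1 ≤ t)
    (hγ : PermittedSeq t γ) : PermittedSeq t (BinaryTree.depths 0 T ++ γ) := by
  refine ⟨?_, ?_, fun x hx => ?_⟩
  · cases T <;> simp [BinaryTree.depths, hγ.1]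
  · exact BinaryTree.isChain_depths.append hγ.2.1 fun x _ y hy => by simp [hγ.1] at hy; omega
  · rcases List.mem_append.1 hx with hx | hx
    · have := (BinaryTree.mem_depths hx).2
      omega
    · exact hγ.2.2 x hx

theorem permittedSeq_replicate_zero (t n : ℕ) : PermittedSeq t (List.replicate (n + 1) 0) :=
  ⟨rfl, List.isChain_replicate_of_rel _ (Nat.zero_le _), fun x hx => by
    simp [List.eq_of_mem_replicate hx]⟩

theorem permittedCount_pos (hm : 0 < m) : 0 < permittedCount m t := by
  obtain ⟨n, rfl⟩ := Nat.exists_eq_add_one.2 hm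
  exact (Set.ncard_pos permittedSeqs_finite).2
    ⟨_, List.length_replicate, permittedSeq_replicate_zero t n⟩

theorem catalan_mul_permittedCount_le {L : ℕ} (hL : L + 1 ≤ t) :
    catalan L * permittedCount m t ≤ permittedCount (L + m) t := by
  calc catalan L * permittedCount m t
      = ((BinaryTree.treesOfNumNodesEq L : Set (BinaryTree Unit)) ×ˢ permittedSeqs m t).ncard := by
        rw [Set.ncard_prod, Set.ncard_coe_finset, BinaryTree.treesOfNumNodesEq_card_eq_catalan]
        rfl
    _ ≤ permittedCount (L + m) t := by
      refine Set.ncard_le_ncard_of_injOn (fun p => BinaryTree.depths 0 p.1 ++ p.2) ?_ ?_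
        permittedSeqs_finite
      · rintro ⟨T, γ⟩ ⟨hT, rfl, hγ⟩
        rw [Finset.mem_coe, BinaryTree.mem_treesOfNumNodesEq] at hT
        exact ⟨by simp [BinaryTree.length_depths, hT], hγ.depths_append (by omega)⟩
      · rintro ⟨T, γ⟩ ⟨hT, -⟩ ⟨T', γ'⟩ ⟨hT', -⟩ h
        simp only at h
        rw [Finset.mem_coe, BinaryTree.mem_treesOfNumNodesEq] at hT hT'
        obtain ⟨hd, rfl⟩ := List.append_inj h (by simp [BinaryTree.length_depths, hT, hT'])
        rw [BinaryTree.depths_injective hd]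

theorem catalan_pow_le_permittedCount {L q : ℕ} (hL : L + 1 ≤ t) (hm : q * L < m) :
    catalan L ^ q ≤ permittedCount m t := by
  induction q generalizing m with
  | zero => exact permittedCount_pos (by simpa using hm)
  | succ q ih =>
    rw [Nat.succ_mul] at hm
    obtain ⟨m, rfl⟩ : ∃ m', m = L + m' := ⟨m - L, by omega⟩
    calc catalan L ^ (q + 1) = catalan L * catalan L ^ q := pow_succ' _ _
      _ ≤ catalan L * permittedCount m t := Nat.mul_le_mul_left _ (ih (by omega))
      _ ≤ permittedCount (L + m) t := catalan_mul_permittedCount_le hL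

theorem catalan_rpow_le_permittedCount {L : ℕ} (hL₀ : 0 < L) (hL : L + 1 ≤ t) (hm : 0 < m) :
    (catalan L : ℝ) ^ (((m : ℝ) - L) / L) ≤ permittedCount m t := by
  have hqm := Nat.div_mul_le_self (m - 1) L
  have hmq := Nat.lt_div_mul_add (a := m - 1) hL₀
  generalize (m - 1) / L = q at hqm hmq
  have hmq' : (m : ℝ) ≤ q * L + L := by exact_mod_cast (by omega : m ≤ q * L + L)
  calc (catalan L : ℝ) ^ (((m : ℝ) - L) / L) ≤ (catalan L : ℝ) ^ (q : ℝ) := by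
        refine Real.rpow_le_rpow_of_exponent_le (by exact_mod_cast catalan_pos L) ?_
        rw [div_le_iff₀ (by positivity)]
        linarith
    _ ≤ permittedCount m t := by
        rw [Real.rpow_natCast]
        exact_mod_cast catalan_pow_le_permittedCount hL (by omega)

end

theorem tendsto_catalan_rpow_inv :
    Tendsto (fun n : ℕ => (catalan n : ℝ) ^ (n : ℝ)⁻¹) atTop (𝓝 4) := by
  have hpoly : Tendsto (fun n : ℕ => (((n : ℝ) + 1) ^ (n : ℝ)⁻¹) ^ 2) atTop (𝓝 1) := by
    have := (tendsto_rpow_div_mul_add 1 1 (-1) one_ne_zero.symm).comp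
      (tendsto_atTop_add_const_right _ 1 tendsto_natCast_atTop_atTop)
    simpa using (this.congr fun n => by simp).pow 2
  refine tendsto_of_tendsto_of_tendsto_of_le_of_le'
    (by simpa using (tendsto_const_nhds (x := (4 : ℝ))).div hpoly one_ne_zero)
    tendsto_const_nhds ?_ ?_
  · filter_upwards [eventually_ge_atTop 4] with n hn
    have hpow_le : (4 : ℝ) ^ n ≤ ((n : ℝ) + 1) ^ 2 * catalan n := by
      have := Nat.four_pow_lt_mul_centralBinom n hn
      rw [← succ_mul_catalan_eq_centralBinom] at this
      exact_mod_cast this.le.trans (by nlinarith)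
    have := Real.rpow_le_rpow (by positivity) hpow_le (by positivity : (0 : ℝ) ≤ (n : ℝ)⁻¹)
    rw [Real.pow_rpow_inv_natCast (by norm_num) (by omega), Real.mul_rpow (by positivity)
      (by positivity), ← Real.rpow_pow_comm (by positivity)] at this
    rw [Pi.div_apply, div_le_iff₀' (by positivity)]
    exact this
  · filter_upwards [eventually_ne_atTop 0] with n hn
    have hle_pow : (catalan n : ℝ) ≤ 4 ^ n := by
      have := n.centralBinom_le_four_pow
      rw [← succ_mul_catalan_eq_centralBinom] at this
      exact_mod_cast (Nat.le_mul_of_pos_left _ n.succ_pos).trans this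
    calc (catalan n : ℝ) ^ (n : ℝ)⁻¹ ≤ ((4 : ℝ) ^ n) ^ (n : ℝ)⁻¹ :=
          Real.rpow_le_rpow (by positivity) hle_pow (by positivity)
      _ = 4 := Real.pow_rpow_inv_natCast (by norm_num) hn

theorem permittedCount_rpow_inv_le (m t k : ℕ) :
    (permittedCount m t : ℝ) ^ (k : ℝ)⁻¹ ≤ 4 ^ ((m : ℝ) / k) :=
  calc (permittedCount m t : ℝ) ^ (k : ℝ)⁻¹ ≤ ((4 : ℝ) ^ m) ^ (k : ℝ)⁻¹ :=
        Real.rpow_le_rpow (by positivity) (by exact_mod_cast permittedCount_le_four_pow)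
          (by positivity)
    _ = 4 ^ ((m : ℝ) / k) := by
        rw [← Real.rpow_natCast, ← Real.rpow_mul (by norm_num), div_eq_mul_inv]

section Asymptotics

variable {m t : ℕ → ℕ}

theorem eventually_lt_permittedCount_rpow_inv (hm : Tendsto (fun k => (m k : ℝ) / k) atTop (𝓝 1))
    (ht : Tendsto t atTop atTop) {a : ℝ} (ha : a < 4) :
    ∀ᶠ k in atTop, a < (permittedCount (m k) (t k) : ℝ) ^ (k : ℝ)⁻¹ := by
  obtain ⟨L, haL, hL₀⟩ :=
    ((tendsto_catalan_rpow_inv.eventually (lt_mem_nhds ha)).and (eventually_gt_atTop 0)).exists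
  have hexp : Tendsto (fun k : ℕ => ((m k : ℝ) - L) / L * (k : ℝ)⁻¹) atTop (𝓝 (L : ℝ)⁻¹) := by
    have := (hm.sub (tendsto_const_div_atTop_nhds_zero_nat (L : ℝ))).div_const (L : ℝ)
    rw [sub_zero, one_div] at this
    exact this.congr fun k => by ring
  have hpow := (tendsto_const_nhds (x := (catalan L : ℝ))).rpow hexp
    (Or.inl (by exact_mod_cast (catalan_pos L).ne'))
  filter_upwards [hpow.eventually (lt_mem_nhds haL), ht.eventually_ge_atTop (L + 1),
    hm.eventually (lt_mem_nhds one_pos)] with k hk htk hmk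
  have hmk : 0 < m k := Nat.pos_of_ne_zero fun h => by simp [h] at hmk
  calc a < (catalan L : ℝ) ^ (((m k : ℝ) - L) / L * (k : ℝ)⁻¹) := hk
    _ = ((catalan L : ℝ) ^ (((m k : ℝ) - L) / L)) ^ (k : ℝ)⁻¹ := Real.rpow_mul (by positivity) _ _
    _ ≤ (permittedCount (m k) (t k) : ℝ) ^ (k : ℝ)⁻¹ :=
        Real.rpow_le_rpow (by positivity) (catalan_rpow_le_permittedCount hL₀ htk hmk)
          (by positivity)

theorem tendsto_permittedCount_rpow_inv (hm : Tendsto (fun k => (m k : ℝ) / k) atTop (𝓝 1))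
    (ht : Tendsto t atTop atTop) :
    Tendsto (fun k => (permittedCount (m k) (t k) : ℝ) ^ (k : ℝ)⁻¹) atTop (𝓝 4) := by
  have hupper : Tendsto (fun k => (4 : ℝ) ^ ((m k : ℝ) / k)) atTop (𝓝 4) := by
    simpa using (tendsto_const_nhds (x := (4 : ℝ))).rpow hm (Or.inl four_ne_zero)
  refine tendsto_order.2
    ⟨fun a ha => eventually_lt_permittedCount_rpow_inv hm ht ha, fun b hb => ?_⟩
  filter_upwards [hupper.eventually (gt_mem_nhds hb)] with k hk
  exact (permittedCount_rpow_inv_le _ _ _).trans_lt hk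

end Asymptotics

theorem Nat.tendsto_sqrt_atTop : Tendsto Nat.sqrt atTop atTop :=
  tendsto_atTop_atTop.2 fun b => ⟨b * b, fun _ hk => Nat.le_sqrt.2 hk⟩

theorem tendsto_sub_two_mul_sqrt_div :
    Tendsto (fun k : ℕ => ((k - 2 * Nat.sqrt k : ℕ) : ℝ) / k) atTop (𝓝 1) := by
  have hsqrt : Tendsto (fun k : ℕ => (Nat.sqrt k : ℝ) / k) atTop (𝓝 0) := by
    refine squeeze_zero' (.of_forall fun k => by positivity) ?_
      (tendsto_inv_atTop_zero.comp (tendsto_natCast_atTop_atTop.comp Nat.tendsto_sqrt_atTop))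
    filter_upwards [eventually_ge_atTop 1] with k hk
    have hs : (0 : ℝ) < Nat.sqrt k := by exact_mod_cast Nat.sqrt_pos.2 hk
    show (Nat.sqrt k : ℝ) / k ≤ (Nat.sqrt k : ℝ)⁻¹
    rw [div_le_iff₀ (by positivity), inv_mul_eq_div, le_div_iff₀ hs]
    exact_mod_cast Nat.sqrt_le k
  have := (hsqrt.const_mul 2).const_sub 1
  rw [mul_zero, sub_zero] at this
  refine this.congr' ?_
  filter_upwards [eventually_ge_atTop 4] with k hk
  have hs : 2 ≤ Nat.sqrt k := Nat.le_sqrt.2 hk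
  have h2s : 2 * Nat.sqrt k ≤ k := (Nat.mul_le_mul_right _ hs).trans (Nat.sqrt_le k)
  rw [Nat.cast_sub h2s]
  field_simp
  push_cast
  ring

/-- With `t = ⌊√k⌋`, `liminf_{k → ∞} Γ(k - 2t, t)^{1/k} ≥ 4`. -/
theorem liminf_permittedCount_rpow_ge_four :
    (4 : ℝ) ≤ Filter.liminf
      (fun k : ℕ =>
        (permittedCount (k - 2 * Nat.sqrt k) (Nat.sqrt k) : ℝ) ^ ((k : ℝ)⁻¹))
      Filter.atTop :=
  (tendsto_permittedCount_rpow_inv tendsto_sub_two_mul_sqrt_div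
    Nat.tendsto_sqrt_atTop).liminf_eq.ge
end
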